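/- arXiv:1603.08706 — 7 statements merged into one kernel-verified Lean document; each statement's English description precedes it below -/
import Mathlib

section
/- Let X be a real Banach space, let A ⊆ X be a bounded set, let N ∈ ℕ, and let D ∈ Δ_N(A) be the symmetrized set of A with respect to points x₁,…,x_N ∈ A. If d ∈ D, then the set (D − d) ∩ (d − D) is the symmetrized set of A with respect to the 2N points x₁+d, x₁−d, …, x_N+d, x_N−d (all of which belong to A); in particular (D − d) ∩ (d − D) ∈ Δ_{2N}(A). -/
open Set Metric Bornology

variable {X : Type*} [NormedAddCommGroup X] [NormedSpace ℝ X] [CompleteSpace X]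

/-- The set `(A - x) ∩ (x - A) = {d | x + d ∈ A ∧ x - d ∈ A}`. -/
def symmAt (A : Set X) (x : X) : Set X := {d | x + d ∈ A ∧ x - d ∈ A}

/-- The symmetrized set of `A` with respect to a family of points:
`⋂ i, (A - x i) ∩ (x i - A)`. -/
def symmSet {ι : Type*} (A : Set X) (x : ι → X) : Set X := ⋂ i, symmAt A (x i)

/-- `Δ_N(A)`: the family of all symmetrized sets of `A` with respect to `N` points of `A`. -/
def DeltaFam (A : Set X) (N : ℕ) : Set (Set X) :=
  {D | ∃ x : Fin N → X, (∀ n, x n ∈ A) ∧ D = symmSet A x}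

/-- `δ₀(A) = diam(A)/2`. -/
noncomputable def delta0 (A : Set X) : ℝ := diam A / 2

/-- `δ_N(A) = inf{δ₀(D) : D ∈ Δ_N(A)}`. -/
noncomputable def deltaN (A : Set X) (N : ℕ) : ℝ := sInf (delta0 '' DeltaFam A N)

/-- `δ_∞(A) = lim_N δ_N(A)`, which equals the infimum since the sequence is
decreasing and bounded below. -/
noncomputable def deltaInf (A : Set X) : ℝ := ⨅ N : ℕ, deltaN A (N + 1)

set_option linter.unusedSectionVars false

theorem mem_symmSet_iff {ι : Type*} {A : Set X} {x : ι → X} {d : X} :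
    d ∈ symmSet A x ↔ ∀ i, x i + d ∈ A ∧ x i - d ∈ A := by
  simp only [symmSet, symmAt, mem_iInter, mem_ofPred_eq]

theorem symmSet_comp_equiv {ι κ : Type*} (A : Set X) (x : ι → X) (e : κ ≃ ι) :
    symmSet A (x ∘ e) = symmSet A x :=
  e.surjective.iInter_comp fun i => symmAt A (x i)

theorem symmSet_mem_deltaFam {ι : Type*} [Fintype ι] {A : Set X} {x : ι → X}
    (hx : ∀ i, x i ∈ A) : symmSet A x ∈ DeltaFam A (Fintype.card ι) := by
  let e := (Fintype.equivFin ι).symm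
  exact ⟨x ∘ e, fun n => hx (e n), (symmSet_comp_equiv A x e).symm⟩

/-- Shifting by `e` around the points `x i ± d` is shifting by `d ± e` around `x i`. -/
theorem symmAt_symmSet {ι : Type*} (A : Set X) (x : ι → X) (d : X) :
    symmAt (symmSet A x) d = symmSet A (Sum.elim (fun i => x i + d) (fun i => x i - d)) := by
  ext e
  simp only [symmAt, mem_ofPred_eq, mem_symmSet_iff, Sum.forall, Sum.elim_inl, Sum.elim_inr]
  have hpp : ∀ i, x i + d + e = x i + (d + e) := fun i => add_assoc _ _ _
  have hpm : ∀ i, x i + d - e = x i + (d - e) := fun i => add_sub_assoc _ _ _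
  have hmp : ∀ i, x i - d + e = x i - (d - e) := fun i => by abel
  have hmm : ∀ i, x i - d - e = x i - (d + e) := fun i => sub_sub _ _ _
  simp only [hpp, hpm, hmp, hmm]
  constructor
  · rintro ⟨hplus, hminus⟩
    exact ⟨fun i => ⟨(hplus i).1, (hminus i).1⟩, fun i => ⟨(hminus i).2, (hplus i).2⟩⟩
  · rintro ⟨hplus, hminus⟩
    exact ⟨fun i => ⟨(hplus i).1, (hminus i).2⟩, fun i => ⟨(hplus i).2, (hminus i).1⟩⟩

theorem stmt0_general (A : Set X) (N : ℕ)
    (x : Fin N → X) (d : X) (hd : d ∈ symmSet A x) :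
    (∀ n, x n + d ∈ A ∧ x n - d ∈ A) ∧
    symmAt (symmSet A x) d
      = symmSet A (Sum.elim (fun n : Fin N => x n + d) (fun n : Fin N => x n - d)) ∧
    symmAt (symmSet A x) d ∈ DeltaFam A (2 * N) := by
  have hpts : ∀ n, x n + d ∈ A ∧ x n - d ∈ A := mem_symmSet_iff.mp hd
  have hmem : ∀ i, Sum.elim (fun n : Fin N => x n + d) (fun n => x n - d) i ∈ A :=
    Sum.forall.mpr ⟨fun n => (hpts n).1, fun n => (hpts n).2⟩
  have hcard : Fintype.card (Fin N ⊕ Fin N) = 2 * N := by simp [two_mul]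
  refine ⟨hpts, symmAt_symmSet A x d, ?_⟩
  rw [symmAt_symmSet, ← hcard]
  exact symmSet_mem_deltaFam hmem

/-- if `D ∈ Δ_N(A)` is the symmetrized set of `A` with respect to
`x₁, …, x_N ∈ A` and `d ∈ D`, then `(D - d) ∩ (d - D)` is the symmetrized set of `A` with
respect to the `2N` points `x₁ + d, x₁ - d, …, x_N + d, x_N - d` (all in `A`); in particular
`(D - d) ∩ (d - D) ∈ Δ_{2N}(A)`. -/
theorem stmt0 (A : Set X) (hA : IsBounded A) (N : ℕ) (hN : 0 < N)
    (x : Fin N → X) (hx : ∀ n, x n ∈ A) (d : X) (hd : d ∈ symmSet A x) :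
    (∀ n, x n + d ∈ A ∧ x n - d ∈ A) ∧
    symmAt (symmSet A x) d
      = symmSet A (Sum.elim (fun n : Fin N => x n + d) (fun n : Fin N => x n - d)) ∧
    symmAt (symmSet A x) d ∈ DeltaFam A (2 * N) :=
  stmt0_general A N x d hd
end

section
/- Let X be a real Banach space, F ⊆ X a finite-dimensional linear subspace, and D ⊆ X a bounded set. If the Kuratowski measure of non-compactness satisfies α(D) > λ > 0, then there exists x₀* ∈ X* with ‖x₀*‖ = 1, x₀* vanishing on F, and sup{x₀*(d) : d ∈ D} > λ. -/
open Set Metric Bornology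

variable {X : Type*} [NormedAddCommGroup X] [NormedSpace ℝ X] [CompleteSpace X]

/-- The Kuratowski measure of non-compactness:
`α(S) = inf{ε > 0 : S is covered by finitely many balls of radius ε}`. -/
noncomputable def kuratowski (S : Set X) : ℝ :=
  sInf {ε : ℝ | 0 < ε ∧ ∃ t : Finset X, S ⊆ ⋃ c ∈ t, closedBall c ε}

/-! If every point of `D` were within `λ` of `F`, then, since the bounded parts of `F` are compact,
`D` would be covered by finitely many balls of radius `λ + ε` for every `ε > 0`, forcing
`α(D) ≤ λ`. Hence some `x ∈ D` has `dist(x, F) > λ`, and Hahn–Banach applied to `x + F` in the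
quotient `X ⧸ F` yields a norm-one functional vanishing on `F` whose value at `x` is
`dist(x, F)`. -/

section

variable {E : Type*} [NormedAddCommGroup E]

theorem ContinuousLinearMap.apply_le_opNorm_mul_infDist [NormedSpace ℝ E] (f : E →L[ℝ] ℝ)
    {s : Set E} (hs : s.Nonempty) (hfs : ∀ y ∈ s, f y = 0) (x : E) : f x ≤ ‖f‖ * infDist x s := by
  have : Nonempty s := hs.to_subtype
  rw [infDist_eq_iInf, Real.mul_iInf_of_nonneg (norm_nonneg f)]
  refine le_ciInf fun ⟨y, hy⟩ => ?_
  calc f x = f (x - y) := by rw [map_sub, hfs y hy, sub_zero]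
    _ ≤ ‖f (x - y)‖ := Real.le_norm_self _
    _ ≤ ‖f‖ * dist x y := by rw [dist_eq_norm]; exact f.le_opNorm _

theorem Submodule.exists_dual_eq_infDist [NormedSpace ℝ E] (F : Submodule ℝ E) {x : E}
    (hx : 0 < infDist x F) :
    ∃ f : E →L[ℝ] ℝ, ‖f‖ = 1 ∧ (∀ y ∈ F, f y = 0) ∧ f x = infDist x F := by
  have hmk : ‖F.mkQL x‖ = infDist x F := QuotientAddGroup.norm_mk x
  obtain ⟨g, hg, hgx⟩ := exists_dual_vector ℝ (F.mkQL x) (hmk ▸ hx.ne')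
  have hfF : ∀ y ∈ F, g.comp F.mkQL y = 0 := fun y hy => by
    simp [(Submodule.Quotient.mk_eq_zero F).mpr hy]
  have hfx : g.comp F.mkQL x = infDist x F := by rw [← hmk]; exact hgx
  refine ⟨g.comp F.mkQL, le_antisymm ?_ ?_, hfF, hfx⟩
  · calc ‖g.comp F.mkQL‖ ≤ ‖g‖ * ‖F.mkQL‖ := g.opNorm_comp_le _
      _ ≤ 1 := by
        rw [hg, one_mul]
        exact ContinuousLinearMap.opNorm_le_bound _ zero_le_one fun z => by
          simpa using Submodule.Quotient.norm_mk_le F z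
  · have := (g.comp F.mkQL).apply_le_opNorm_mul_infDist ⟨0, F.zero_mem⟩ hfF x
    rw [hfx] at this
    exact one_le_of_le_mul_right₀ hx (by linarith)

theorem kuratowski_le_of_subset_cthickening {S K : Set E} {r : ℝ} (hr : 0 ≤ r)
    (hK : TotallyBounded K) (hS : S ⊆ cthickening r K) : kuratowski S ≤ r := by
  refine le_of_forall_pos_le_add fun ε hε => ?_
  obtain ⟨t, ht, hKt⟩ := totallyBounded_iff.mp hK (ε / 2) (half_pos hε)
  refine csInf_le ⟨0, fun _ h => h.1.le⟩ ⟨by linarith, ht.toFinset, fun d hd => ?_⟩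
  have hd' : d ∈ thickening (r + ε / 2) K :=
    cthickening_subset_thickening' (by linarith) (by linarith) K (hS hd)
  obtain ⟨y, hyK, hdy⟩ := mem_thickening_iff.mp hd'
  obtain ⟨c, hct, hyc⟩ := mem_iUnion₂.mp (hKt hyK)
  refine mem_iUnion₂.mpr ⟨c, ht.mem_toFinset.mpr hct, ?_⟩
  have := dist_triangle d y c
  rw [mem_closedBall]
  linarith [mem_ball.mp hyc]

theorem kuratowski_le_of_forall_infDist_le [NormedSpace ℝ E] (F : Submodule ℝ E)
    [FiniteDimensional ℝ F] {D : Set E} (hD : IsBounded D) {r : ℝ} (hr : 0 ≤ r)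
    (h : ∀ d ∈ D, infDist d F ≤ r) : kuratowski D ≤ r := by
  refine le_of_forall_pos_le_add fun δ hδ => ?_
  obtain ⟨R, hR⟩ := hD.subset_closedBall 0
  let K : Set E := (↑) '' closedBall (0 : F) (R + r + δ)
  have hK : TotallyBounded K :=
    ((isCompact_closedBall _ _).image continuous_subtype_val).totallyBounded
  refine kuratowski_le_of_subset_cthickening (by linarith) hK fun d hd => ?_
  obtain ⟨y, hyF, hdy⟩ :=
    (infDist_lt_iff ⟨0, F.zero_mem⟩).mp ((h d hd).trans_lt (lt_add_of_pos_right r hδ))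
  refine mem_cthickening_of_dist_le d y _ K ⟨⟨y, hyF⟩, ?_, rfl⟩ hdy.le
  have hd0 : ‖d‖ ≤ R := by simpa using hR hd
  have hy : ‖y‖ ≤ ‖d‖ + dist y d := norm_le_of_mem_closedBall (mem_closedBall.mpr le_rfl)
  rw [mem_closedBall, dist_zero_right, Submodule.coe_norm]
  linarith [dist_comm d y]

end

/-- if `F ⊆ X` is a finite-dimensional subspace, `D ⊆ X` is bounded and
`α(D) > λ > 0`, then there is a norm-one functional vanishing on `F` whose supremum on `D`
exceeds `λ`. -/
theorem stmt4 (F : Submodule ℝ X) (hF : FiniteDimensional ℝ F)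
    (D : Set X) (hD : IsBounded D) (lam : ℝ) (hlam : 0 < lam) (h : lam < kuratowski D) :
    ∃ f : X →L[ℝ] ℝ, ‖f‖ = 1 ∧ (∀ y ∈ F, f y = 0) ∧ lam < sSup (f '' D) := by
  obtain ⟨x, hxD, hx⟩ : ∃ x ∈ D, lam < infDist x F := by
    by_contra! hc
    exact h.not_ge (kuratowski_le_of_forall_infDist_le F hD hlam.le hc)
  obtain ⟨f, hf, hfF, hfx⟩ := F.exists_dual_eq_infDist (hlam.trans hx)
  refine ⟨f, hf, hfF, hx.trans_le ?_⟩
  rw [← hfx]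
  exact le_csSup (f.lipschitz.isBounded_image hD).bddAbove (mem_image_of_mem f hxD)
end

section
/- Let X be a real Banach space. The following are equivalent: (i) c₀ is not isomorphic to a (closed linear) subspace of X; (ii) δ_∞(C) = 0 for every bounded set C ⊆ X; (iii) δ_∞(C) = 0 for every bounded, convex, closed set C ⊆ X. -/
open Set Metric Bornology

variable {X : Type*} [NormedAddCommGroup X] [NormedSpace ℝ X] [CompleteSpace X]

open scoped ZeroAtInfty

/-- `X` contains an isomorphic copy of `c₀`: a continuous linear map `T : c₀ → X` which is
bounded below (hence an isomorphism onto its range). -/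
def ContainsC0 (X : Type*) [NormedAddCommGroup X] [NormedSpace ℝ X] : Prop :=
  ∃ T : C₀(ℕ, ℝ) →L[ℝ] X, ∃ a : ℝ, 0 < a ∧ ∀ z : C₀(ℕ, ℝ), a * ‖z‖ ≤ ‖T z‖


/-!
If `δ_∞(C) > ρ > 0`, every finite subset `S` of `C` has a symmetrized set of diameter `> 2ρ`,
so there is `e` with `‖e‖ > ρ` and `p ± e ∈ C` for all `p ∈ S`. Iterating from one point gives
`d₀, d₁, …` with `‖dₙ‖ > ρ` and all points `x₀ + ∑_{i<n} ±dᵢ` in `C`; hence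
`∑ |f dᵢ| ≤ δ₀(C) ‖f‖` for every functional `f`, i.e. `∑ dᵢ` is weakly unconditionally Cauchy
with terms bounded away from `0`. By the Bessaga–Pełczyński argument (norming functionals `fₖ`
for the `dₖ`, and a subsequence along which the matrix `fₖ dⱼ` is almost diagonal) a subsequence
of `(dₖ)` is equivalent to the unit vector basis of `c₀`.

Conversely, if `T : c₀ → X` is bounded below by `a`, then `C = T(B_{c₀})` is bounded, convex and
closed, and for finitely many points `T zᵢ ∈ C` there is a coordinate `m` where all `zᵢ` are
`< 1/2`, so `±T(eₘ/2)` lies in their symmetrized set and `δ_∞(C) ≥ a/2`.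
-/

open Filter Topology Finset

namespace ZeroAtInftyContinuousMap

variable {α β : Type*} [TopologicalSpace α] [NormedAddCommGroup β]

lemma norm_apply_le (f : C₀(α, β)) (x : α) : ‖f x‖ ≤ ‖f‖ :=
  norm_toBCF_eq_norm (f := f) ▸ f.toBCF.norm_coe_le_norm x

lemma norm_le {f : C₀(α, β)} {C : ℝ} (hC : 0 ≤ C) : ‖f‖ ≤ C ↔ ∀ x, ‖f x‖ ≤ C := by
  rw [← norm_toBCF_eq_norm, BoundedContinuousFunction.norm_le hC]
  rfl

lemma tendsto_atTop_zero (f : C₀(ℕ, β)) : Tendsto f atTop (𝓝 0) :=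
  cocompact_eq_atTop (α := ℕ) ▸ zero_at_infty f

lemma exists_coe_eq_single [DiscreteTopology α] [DecidableEq α] (a : α) (b : β) :
    ∃ f : C₀(α, β), ⇑f = Pi.single a b := by
  refine ⟨⟨⟨Pi.single a b, continuous_of_discreteTopology⟩, ?_⟩, rfl⟩
  rw [cocompact_eq_cofinite]
  refine tendsto_const_nhds.congr' ?_
  filter_upwards [(Set.finite_singleton a).compl_mem_cofinite] with x hx
  simp [show x ≠ a from hx]

end ZeroAtInftyContinuousMap

lemma exists_strictMono_forall_lt_rel {R : ℕ → ℕ → Prop} (h : ∀ a, ∀ᶠ b in atTop, R a b)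
    (n₀ : ℕ) : ∃ ψ : ℕ → ℕ, StrictMono ψ ∧ (∀ i, n₀ ≤ ψ i) ∧ ∀ i j, i < j → R (ψ i) (ψ j) := by
  simp only [eventually_atTop] at h
  choose B hB using h
  -- `ψ (n + 1)` exceeds the thresholds `B a` of all `a ≤ ψ n`
  let B' : ℕ → ℕ := fun a => (range (a + 1)).sup B
  let ψ : ℕ → ℕ := fun n => Nat.rec n₀ (fun _ p => max (p + 1) (B' p)) n
  have hψ : StrictMono ψ :=
    strictMono_nat_of_lt_succ fun n => Nat.lt_of_succ_le (le_max_left _ _)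
  refine ⟨ψ, hψ, fun i => hψ.monotone (Nat.zero_le i), fun i j hij => ?_⟩
  obtain ⟨j, rfl⟩ := Nat.exists_eq_add_of_lt hij
  refine hB _ _ (le_trans ?_ (le_max_right (ψ (i + j) + 1) _))
  exact le_sup (f := B) (mem_range_succ_iff.2 (hψ.monotone (Nat.le_add_right i j)))

lemma Summable.exists_sum_tail_le {g : ℕ → ℝ} (hg : Summable g) {η : ℝ} (hη : 0 < η) :
    ∃ N, ∀ s : Finset ℕ, (∀ j ∈ s, N ≤ j) → ∑ j ∈ s, g j ≤ η := by
  obtain ⟨t, ht⟩ := hg.vanishing (Metric.ball_mem_nhds 0 hη)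
  obtain ⟨N, hN⟩ := t.exists_nat_subset_range
  refine ⟨N, fun s hs => ?_⟩
  have hdisj : Disjoint s t := disjoint_left.2 fun j hj hjt =>
    (hs j hj).not_gt (mem_range.1 (hN hjt))
  have := ht s hdisj
  rw [mem_ball_zero_iff, Real.norm_eq_abs] at this
  exact (le_abs_self _).trans this.le

lemma exists_strictMono_tendsto_of_abs_le {u : ℕ → ℕ → ℝ} {M : ℝ} (hu : ∀ k j, |u k j| ≤ M) :
    ∃ c : ℕ → ℝ, ∃ φ : ℕ → ℕ, StrictMono φ ∧
      ∀ j, Tendsto (fun k => u (φ k) j) atTop (𝓝 (c j)) := by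
  obtain ⟨c, -, φ, hφ, hc⟩ :=
    (isCompact_univ_pi fun _ : ℕ => isCompact_Icc (a := -M) (b := M)).tendsto_subseq (x := u)
      fun k => mem_univ_pi.2 fun j => abs_le.1 (hu k j)
  exact ⟨c, φ, hφ, tendsto_pi_nhds.1 hc⟩

lemma exists_strictMono_offDiag_sum_abs_le_of_tendsto {u : ℕ → ℕ → ℝ} {c : ℕ → ℝ} {M σ : ℝ}
    (hu : ∀ k s, ∑ j ∈ s, |u k j| ≤ M) (hc : ∀ j, Tendsto (fun k => u k j) atTop (𝓝 (c j)))
    (hσ : 0 < σ) :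
    ∃ ψ : ℕ → ℕ, StrictMono ψ ∧ ∀ k s, k ∉ s → ∑ j ∈ s, |u (ψ k) (ψ j)| ≤ σ := by
  have hc_sum : Summable fun j => |c j| :=
    summable_of_sum_le (fun _ => abs_nonneg _) fun s =>
      le_of_tendsto' (tendsto_finsetSum s fun j _ => (hc j).abs) fun k => hu k s
  obtain ⟨N₀, hN₀⟩ := hc_sum.exists_sum_tail_le (by positivity : 0 < σ / 4)
  choose K hK using fun k => (summable_of_sum_le (fun _ => abs_nonneg _) (hu k)).exists_sum_tail_le
    (by positivity : 0 < σ / 2)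
  -- for `a < b`, `R a b` controls the entry `(a, b)` right of the diagonal by the tail of row `a`,
  -- and the entry `(b, a)` left of it by the limit `c a`
  obtain ⟨ψ, hψ, hψN₀, hψR⟩ := exists_strictMono_forall_lt_rel
    (R := fun a b => K a ≤ b ∧ |u b a - c a| ≤ σ / 8 * (1 / 2) ^ a) (fun a =>
      (eventually_ge_atTop (K a)).and <| (Metric.tendsto_nhds.1 (hc a) _ (by positivity)).mono
        fun b hb => (Real.dist_eq _ _ ▸ hb).le) N₀
  refine ⟨ψ, hψ, fun k s hk => ?_⟩
  rw [← sum_image (f := fun a => |u (ψ k) a|) hψ.injective.injOn,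
    ← sum_filter_add_sum_filter_not _ (· < ψ k)]
  have hlow : ∑ a ∈ s.image ψ with a < ψ k, |u (ψ k) a| ≤ σ / 2 := by
    calc ∑ a ∈ s.image ψ with a < ψ k, |u (ψ k) a|
        ≤ ∑ a ∈ s.image ψ with a < ψ k, (|c a| + σ / 8 * (1 / 2) ^ a) := by
          refine sum_le_sum fun a ha => ?_
          obtain ⟨⟨j, -, rfl⟩, hjk⟩ := by simpa only [mem_filter, Finset.mem_image] using ha
          have := (hψR j k (hψ.lt_iff_lt.1 hjk)).2
          have := abs_sub_abs_le_abs_sub (u (ψ k) (ψ j)) (c (ψ j))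
          linarith
      _ = ∑ a ∈ s.image ψ with a < ψ k, |c a|
            + σ / 8 * ∑ a ∈ s.image ψ with a < ψ k, (1 / 2 : ℝ) ^ a := by
          rw [sum_add_distrib, mul_sum]
      _ ≤ σ / 4 + σ / 8 * 2 := by
          gcongr
          · refine hN₀ _ fun a ha => ?_
            obtain ⟨⟨j, -, rfl⟩, -⟩ := by simpa only [mem_filter, Finset.mem_image] using ha
            exact hψN₀ j
          · exact (summable_geometric_two.sum_le_tsum _ fun _ _ => by positivity).trans_eq
              tsum_geometric_two
      _ = σ / 2 := by ring
  have hhigh : ∑ a ∈ s.image ψ with ¬a < ψ k, |u (ψ k) a| ≤ σ / 2 := by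
    refine hK _ _ fun a ha => ?_
    obtain ⟨⟨j, hjs, rfl⟩, hkj⟩ := by simpa only [mem_filter, Finset.mem_image] using ha
    exact (hψR k j (lt_of_le_of_ne (hψ.le_iff_le.1 (not_lt.1 hkj)) fun h => hk (h ▸ hjs))).1
  linarith

lemma exists_strictMono_offDiag_sum_abs_le {u : ℕ → ℕ → ℝ} {M σ : ℝ}
    (hu : ∀ k s, ∑ j ∈ s, |u k j| ≤ M) (hσ : 0 < σ) :
    ∃ φ : ℕ → ℕ, StrictMono φ ∧ ∀ k s, k ∉ s → ∑ j ∈ s, |u (φ k) (φ j)| ≤ σ := by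
  obtain ⟨c, φ, hφ, hc⟩ := exists_strictMono_tendsto_of_abs_le (M := M) fun k j => by
    simpa using hu k {j}
  obtain ⟨ψ, hψ, hoff⟩ := exists_strictMono_offDiag_sum_abs_le_of_tendsto
    (u := fun k j => u (φ k) (φ j)) (M := M)
    (fun k s => (sum_image hφ.injective.injOn).symm.trans_le (hu _ _)) (fun j => hc (φ j)) hσ
  exact ⟨φ ∘ ψ, hφ.comp hψ, hoff⟩

-- `∑ d i` is a weakly unconditionally Cauchy series, with constant `M`
def WUCWith {E ι : Type*} [NormedAddCommGroup E] [NormedSpace ℝ E] (M : ℝ) (d : ι → E) :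
    Prop :=
  ∀ (f : StrongDual ℝ E) (s : Finset ι), ∑ i ∈ s, |f (d i)| ≤ M * ‖f‖

namespace WUCWith

variable {E ι : Type*} [NormedAddCommGroup E] [NormedSpace ℝ E] {M : ℝ} {d : ι → E}

lemma of_sum_range {d : ℕ → E}
    (h : ∀ (f : StrongDual ℝ E) n, ∑ i ∈ range n, |f (d i)| ≤ M * ‖f‖) :
    WUCWith M d := fun f s => by
  obtain ⟨n, hn⟩ := s.exists_nat_subset_range
  exact (sum_le_sum_of_subset_of_nonneg hn fun _ _ _ => abs_nonneg _).trans (h f n)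

lemma comp_injective {κ : Type*} (hd : WUCWith M d) {φ : κ → ι} (hφ : Function.Injective φ) :
    WUCWith M (d ∘ φ) := fun f s => by
  classical
  exact (sum_image hφ.injOn).symm.trans_le (hd f _)

lemma norm_sum_smul_le (hd : WUCWith M d) (hM : 0 ≤ M) {s : Finset ι} {z : ι → ℝ} {b : ℝ}
    (hb : 0 ≤ b) (hz : ∀ i ∈ s, |z i| ≤ b) : ‖∑ i ∈ s, z i • d i‖ ≤ M * b := by
  refine NormedSpace.norm_le_dual_bound ℝ _ (mul_nonneg hM hb) fun f => ?_
  calc ‖f (∑ i ∈ s, z i • d i)‖ = |∑ i ∈ s, z i * f (d i)| := by simp [map_sum]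
    _ ≤ ∑ i ∈ s, |z i| * |f (d i)| := by
          simpa only [abs_mul] using abs_sum_le_sum_abs (fun i => z i * f (d i)) s
    _ ≤ ∑ i ∈ s, b * |f (d i)| := by gcongr with i hi; exact hz i hi
    _ ≤ b * (M * ‖f‖) := by rw [← mul_sum]; exact mul_le_mul_of_nonneg_left (hd f s) hb
    _ = M * b * ‖f‖ := by ring

lemma summable_smul [CompleteSpace E] {d : ℕ → E} (hd : WUCWith M d) (hM : 0 ≤ M)
    (z : C₀(ℕ, ℝ)) : Summable fun k => z k • d k := by
  refine summable_iff_vanishing_norm.2 fun ε hε => ?_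
  have hη : 0 < ε / (M + 1) := by positivity
  obtain ⟨N, hN⟩ := eventually_atTop.1 (Metric.tendsto_nhds.1 z.tendsto_atTop_zero _ hη)
  refine ⟨range N, fun t ht => (hd.norm_sum_smul_le hM hη.le fun k hk => ?_).trans_lt ?_⟩
  · have := hN k (not_lt.1 fun hkN => disjoint_left.1 ht hk (mem_range.2 hkN))
    rw [Real.dist_eq, sub_zero] at this
    exact this.le
  · rw [mul_div_assoc', div_lt_iff₀ (by linarith)]
    nlinarith

lemma exists_hasSum_clm [CompleteSpace E] {d : ℕ → E} (hd : WUCWith M d) (hM : 0 ≤ M) :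
    ∃ T : C₀(ℕ, ℝ) →L[ℝ] E, ∀ z, HasSum (fun k => z k • d k) (T z) := by
  have hs := hd.summable_smul hM
  let L : C₀(ℕ, ℝ) →ₗ[ℝ] E :=
    { toFun := fun z => ∑' k, z k • d k
      map_add' := fun z w => by
        simp only [ZeroAtInftyContinuousMap.add_apply, add_smul, (hs z).tsum_add (hs w)]
      map_smul' := fun a z => by
        simp only [ZeroAtInftyContinuousMap.smul_apply, smul_eq_mul, mul_smul, RingHom.id_apply,
          (hs z).tsum_const_smul a] }
  refine ⟨L.mkContinuous M fun z => ?_, fun z => (hs z).hasSum⟩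
  exact le_of_tendsto' (hs z).hasSum.tendsto_sum_nat.norm fun n =>
    hd.norm_sum_smul_le hM (norm_nonneg z) fun k _ => z.norm_apply_le k

end WUCWith

section Embedding

variable {E : Type*} [NormedAddCommGroup E] [NormedSpace ℝ E]

lemma abs_apply_sub_le_of_hasSum {d : ℕ → E} {g : StrongDual ℝ E} {σ : ℝ} {k : ℕ}
    (hoff : ∀ s, k ∉ s → ∑ j ∈ s, |g (d j)| ≤ σ) {z : C₀(ℕ, ℝ)} {x : E}
    (hx : HasSum (fun j => z j • d j) x) : |g x - z k * g (d k)| ≤ σ * ‖z‖ := by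
  have hgx : HasSum (fun j => z j * g (d j)) (g x) := by simpa using hx.mapL g
  refine le_of_tendsto ((hgx.tendsto_sum_nat.sub_const _).abs) ?_
  filter_upwards [eventually_gt_atTop k] with n hn
  rw [← sum_erase_eq_sub (mem_range.2 hn)]
  calc |∑ j ∈ (range n).erase k, z j * g (d j)|
      ≤ ∑ j ∈ (range n).erase k, ‖z‖ * |g (d j)| := by
        refine (abs_sum_le_sum_abs _ _).trans (sum_le_sum fun j _ => ?_)
        rw [abs_mul, ← Real.norm_eq_abs (z j)]
        exact mul_le_mul_of_nonneg_right (z.norm_apply_le j) (abs_nonneg _)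
    _ ≤ σ * ‖z‖ := by
        rw [← mul_sum, mul_comm]
        exact mul_le_mul_of_nonneg_right (hoff _ (notMem_erase k _)) (norm_nonneg z)

lemma le_norm_of_hasSum {d : ℕ → E} {G : ℕ → StrongDual ℝ E} {ρ σ : ℝ} (hρ : 0 < ρ)
    (hG : ∀ k, ‖G k‖ ≤ 1) (hdiag : ∀ k, ρ ≤ G k (d k))
    (hoff : ∀ k s, k ∉ s → ∑ j ∈ s, |G k (d j)| ≤ σ) {z : C₀(ℕ, ℝ)} {x : E}
    (hx : HasSum (fun j => z j • d j) x) : (ρ - σ) * ‖z‖ ≤ ‖x‖ := by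
  have hcoord : ∀ k, ρ * ‖z k‖ ≤ ‖x‖ + σ * ‖z‖ := fun k => by
    have h₁ := abs_apply_sub_le_of_hasSum (hoff k) hx
    have h₂ : |G k x| ≤ ‖x‖ := by simpa using (G k).le_of_opNorm_le (hG k) x
    have h₃ : ρ * ‖z k‖ ≤ |z k * G k (d k)| := by
      rw [abs_mul, Real.norm_eq_abs, mul_comm, abs_of_nonneg (hρ.le.trans (hdiag k))]
      exact mul_le_mul_of_nonneg_left (hdiag k) (abs_nonneg _)
    have := abs_sub_abs_le_abs_sub (z k * G k (d k)) (G k x)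
    rw [abs_sub_comm] at this
    linarith
  have hσ : 0 ≤ σ := by simpa using hoff 0 ∅ (notMem_empty 0)
  have : ‖z‖ ≤ (‖x‖ + σ * ‖z‖) / ρ :=
    (ZeroAtInftyContinuousMap.norm_le (by positivity)).2 fun k =>
      (le_div_iff₀' hρ).2 (hcoord k)
  rw [le_div_iff₀' hρ] at this
  linarith

theorem WUCWith.containsC0 [CompleteSpace E] {d : ℕ → E} {M ρ : ℝ} (hd : WUCWith M d)
    (hM : 0 ≤ M) (hρ : 0 < ρ) (hdρ : ∀ k, ρ ≤ ‖d k‖) : ContainsC0 E := by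
  choose f hf_norm hf_apply using fun k =>
    exists_dual_vector ℝ (d k) (hρ.trans_le (hdρ k)).ne'
  obtain ⟨φ, hφ, hoff⟩ := exists_strictMono_offDiag_sum_abs_le (u := fun k j => f k (d j))
    (M := M) (fun k s => by simpa [hf_norm] using hd (f k) s) (half_pos hρ)
  obtain ⟨T, hT⟩ := (hd.comp_injective hφ.injective).exists_hasSum_clm hM
  refine ⟨T, ρ / 2, half_pos hρ, fun z => ?_⟩
  have := le_norm_of_hasSum hρ (G := f ∘ φ) (fun k => (hf_norm _).le)
    (fun k => by simpa [hf_apply] using hdρ (φ k)) hoff (hT z)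
  linarith

end Embedding

section Symmetrization

variable {E ι : Type*} [NormedAddCommGroup E] {A : Set E}

lemma mem_symmSet {x : ι → E} {v : E} : v ∈ symmSet A x ↔ ∀ i, x i + v ∈ A ∧ x i - v ∈ A := by
  simp [symmSet, symmAt]

lemma neg_mem_symmSet {x : ι → E} {v : E} (hv : v ∈ symmSet A x) : -v ∈ symmSet A x :=
  mem_symmSet.2 fun i => by simpa [← sub_eq_add_neg, and_comm] using mem_symmSet.1 hv i

lemma isBounded_symmSet [Nonempty ι] (hA : IsBounded A) (x : ι → E) :
    IsBounded (symmSet A x) := by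
  obtain ⟨i⟩ := ‹Nonempty ι›
  refine (isBounded_sub hA (isBounded_singleton (x := x i))).subset fun v hv => ?_
  exact ⟨x i + v, (mem_symmSet.1 hv i).1, x i, rfl, add_sub_cancel_left _ _⟩

lemma delta0_nonneg (A : Set E) : 0 ≤ delta0 A := div_nonneg diam_nonneg zero_le_two

lemma norm_le_delta0 [NormedSpace ℝ E] {D : Set E} (hD : IsBounded D) {v : E} (hv : v ∈ D)
    (hv' : -v ∈ D) : ‖v‖ ≤ delta0 D := by
  have := dist_le_diam_of_mem hD hv hv'
  rw [dist_eq_norm, sub_neg_eq_add, ← two_smul ℝ v, norm_smul, Real.norm_two] at this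
  rw [delta0]
  linarith

lemma exists_lt_norm_of_lt_delta0 {D : Set E} {ρ : ℝ} (hρ : 0 ≤ ρ) (hρD : ρ < delta0 D) :
    ∃ e ∈ D, ρ < ‖e‖ := by
  by_contra! h
  have : diam D ≤ 2 * ρ := diam_le_of_forall_dist_le (by linarith) fun e he e' he' =>
    (dist_le_norm_add_norm e e').trans (by linarith [h e he, h e' he'])
  rw [delta0] at hρD
  linarith

lemma deltaN_nonneg (A : Set E) (N : ℕ) : 0 ≤ deltaN A N :=
  Real.sInf_nonneg <| by rintro _ ⟨D, -, rfl⟩; exact delta0_nonneg D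

lemma deltaInf_nonneg (A : Set E) : 0 ≤ deltaInf A := le_ciInf fun _ => deltaN_nonneg A _

lemma deltaInf_le_deltaN (A : Set E) (N : ℕ) : deltaInf A ≤ deltaN A (N + 1) :=
  ciInf_le ⟨0, by rintro _ ⟨M, rfl⟩; exact deltaN_nonneg A _⟩ N

lemma deltaInf_le_delta0_symmSet [Finite ι] [Nonempty ι] {x : ι → E} (hx : ∀ i, x i ∈ A) :
    deltaInf A ≤ delta0 (symmSet A x) := by
  obtain ⟨n, ⟨e⟩⟩ := Finite.exists_equiv_fin ι
  obtain ⟨N, rfl⟩ : ∃ N, n = N + 1 := Nat.exists_eq_succ_of_ne_zero <| by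
    rintro rfl
    exact (e (Classical.arbitrary ι)).elim0
  have hsymm : symmSet A (x ∘ e.symm) = symmSet A x :=
    e.symm.surjective.iInter_comp fun i => symmAt A (x i)
  refine (deltaInf_le_deltaN A N).trans <|
    csInf_le ⟨0, by rintro _ ⟨D, -, rfl⟩; exact delta0_nonneg D⟩
      ⟨_, ⟨x ∘ e.symm, fun _ => hx _, hsymm.symm⟩, rfl⟩

lemma le_deltaInf {b : ℝ} (hA : A.Nonempty)
    (h : ∀ (N : ℕ) (x : Fin (N + 1) → E), (∀ i, x i ∈ A) → b ≤ delta0 (symmSet A x)) :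
    b ≤ deltaInf A := by
  obtain ⟨a, ha⟩ := hA
  exact le_ciInf fun N => le_csInf ⟨_, _, ⟨fun _ => a, fun _ => ha, rfl⟩, rfl⟩ <| by
    rintro _ ⟨D, ⟨x, hx, rfl⟩, rfl⟩
    exact h N x hx

lemma nonempty_of_deltaInf_pos (hA : 0 < deltaInf A) : A.Nonempty := by
  by_contra! h
  have hfam : DeltaFam A 1 = ∅ := by
    ext D
    simp [DeltaFam, h]
  have hle := deltaInf_le_deltaN A 0
  rw [deltaN, zero_add, hfam, image_empty, Real.sInf_empty] at hle
  linarith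

lemma exists_add_sub_mem_of_lt_deltaInf {C S : Set E} (hS : S.Finite) (hS₀ : S.Nonempty)
    (hSC : S ⊆ C) {ρ : ℝ} (hρ : 0 ≤ ρ) (hρC : ρ < deltaInf C) :
    ∃ e : E, ρ < ‖e‖ ∧ ∀ p ∈ S, p + e ∈ C ∧ p - e ∈ C := by
  have := hS.to_subtype
  have := hS₀.to_subtype
  obtain ⟨e, he, hρe⟩ := exists_lt_norm_of_lt_delta0 hρ <|
    hρC.trans_le (deltaInf_le_delta0_symmSet (x := ((↑) : S → E)) fun p => hSC p.2)
  exact ⟨e, hρe, fun p hp => mem_symmSet.1 he ⟨p, hp⟩⟩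

lemma exists_signTree_of_lt_deltaInf {C : Set E} (hC : C.Nonempty) {ρ : ℝ} (hρ : 0 ≤ ρ)
    (hρC : ρ < deltaInf C) :
    ∃ (S : ℕ → Set E) (d : ℕ → E), (S 0).Nonempty ∧ (∀ n, S n ⊆ C) ∧ (∀ n, ρ < ‖d n‖) ∧
      ∀ n, ∀ p ∈ S n, p + d n ∈ S (n + 1) ∧ p - d n ∈ S (n + 1) := by
  have step : ∀ S : Set E, ∃ e : E, S.Finite ∧ S.Nonempty ∧ S ⊆ C →
      ρ < ‖e‖ ∧ ∀ p ∈ S, p + e ∈ C ∧ p - e ∈ C := fun S => by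
    by_cases h : S.Finite ∧ S.Nonempty ∧ S ⊆ C
    · obtain ⟨e, he⟩ := exists_add_sub_mem_of_lt_deltaInf h.1 h.2.1 h.2.2 hρ hρC
      exact ⟨e, fun _ => he⟩
    · exact ⟨0, fun h' => absurd h' h⟩
  choose e he using step
  let S : ℕ → Set E := fun n =>
    Nat.rec {hC.some} (fun _ T => (· + e T) '' T ∪ (· - e T) '' T) n
  have hS : ∀ n, (S n).Finite ∧ (S n).Nonempty ∧ S n ⊆ C := by
    intro n
    induction n with
    | zero =>
      exact ⟨finite_singleton _, singleton_nonempty _, singleton_subset_iff.2 hC.some_mem⟩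
    | succ n ih =>
      refine ⟨(ih.1.image _).union (ih.1.image _), (ih.2.1.image _).inl, ?_⟩
      rintro _ (⟨p, hp, rfl⟩ | ⟨p, hp, rfl⟩)
      exacts [((he _ ih).2 p hp).1, ((he _ ih).2 p hp).2]
  exact ⟨S, fun n => e (S n), (hS 0).2.1, fun n => (hS n).2.2, fun n => (he _ (hS n)).1,
    fun n p hp => ⟨.inl ⟨p, hp, rfl⟩, .inr ⟨p, hp, rfl⟩⟩⟩

end Symmetrization

section SignTree

variable {E : Type*} [NormedAddCommGroup E] [NormedSpace ℝ E]

lemma exists_mem_two_mul_sum_abs_le {S : ℕ → Set E} {d : ℕ → E} (hS₀ : (S 0).Nonempty)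
    (hS : ∀ n, ∀ p ∈ S n, p + d n ∈ S (n + 1) ∧ p - d n ∈ S (n + 1)) (f : StrongDual ℝ E)
    (n : ℕ) : ∃ p ∈ S n, ∃ q ∈ S n, 2 * ∑ i ∈ range n, |f (d i)| ≤ f p - f q := by
  induction n with
  | zero => obtain ⟨p, hp⟩ := hS₀; exact ⟨p, hp, p, hp, by simp⟩
  | succ n ih =>
    obtain ⟨p, hp, q, hq, hpq⟩ := ih
    rw [sum_range_succ]
    rcases le_or_gt 0 (f (d n)) with h | h
    · refine ⟨p + d n, (hS n p hp).1, q - d n, (hS n q hq).2, ?_⟩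
      rw [map_add, map_sub, abs_of_nonneg h]
      linarith
    · refine ⟨p - d n, (hS n p hp).2, q + d n, (hS n q hq).1, ?_⟩
      rw [map_add, map_sub, abs_of_neg h]
      linarith

lemma wucWith_delta0_of_signTree {C : Set E} (hC : IsBounded C) {S : ℕ → Set E} {d : ℕ → E}
    (hS₀ : (S 0).Nonempty) (hSC : ∀ n, S n ⊆ C)
    (hS : ∀ n, ∀ p ∈ S n, p + d n ∈ S (n + 1) ∧ p - d n ∈ S (n + 1)) :
    WUCWith (delta0 C) d := WUCWith.of_sum_range fun f n => by
  obtain ⟨p, hp, q, hq, hpq⟩ := exists_mem_two_mul_sum_abs_le hS₀ hS f n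
  have : f p - f q ≤ ‖f‖ * diam C := by
    rw [← map_sub]
    refine (le_abs_self _).trans ((f.le_opNorm _).trans ?_)
    rw [← dist_eq_norm]
    exact mul_le_mul_of_nonneg_left (dist_le_diam_of_mem hC (hSC n hp) (hSC n hq))
      (norm_nonneg f)
  rw [delta0]
  linarith

end SignTree

lemma half_le_delta0_symmSet_image_closedBall {E ι : Type*} [NormedAddCommGroup E]
    [NormedSpace ℝ E] [Finite ι] [Nonempty ι] {T : C₀(ℕ, ℝ) →L[ℝ] E} {a : ℝ} (ha : 0 ≤ a)
    (hT : ∀ z, a * ‖z‖ ≤ ‖T z‖) {x : ι → E} (hx : ∀ i, x i ∈ T '' closedBall 0 1) :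
    a / 2 ≤ delta0 (symmSet (T '' closedBall 0 1) x) := by
  choose z hz hzx using hx
  obtain ⟨m, hm⟩ : ∃ m, ∀ i, |z i m| < 1 / 2 :=
    (eventually_all.2 fun i =>
      (Metric.tendsto_nhds.1 (z i).tendsto_atTop_zero _ one_half_pos).mono
        fun m hm => by rwa [Real.dist_eq, sub_zero] at hm).exists
  obtain ⟨u, hu⟩ := ZeroAtInftyContinuousMap.exists_coe_eq_single m (1 / 2 : ℝ)
  have hball : ∀ i (s : ℝ), |s| = 1 → z i + s • u ∈ closedBall 0 1 := fun i s hs => by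
    rw [mem_closedBall_zero_iff, ZeroAtInftyContinuousMap.norm_le zero_le_one]
    intro k
    have hzk := ((z i).norm_apply_le k).trans (mem_closedBall_zero_iff.1 (hz i))
    simp only [ZeroAtInftyContinuousMap.add_apply, ZeroAtInftyContinuousMap.smul_apply, hu,
      Pi.single_apply, smul_eq_mul, Real.norm_eq_abs] at hzk ⊢
    split_ifs with hkm
    · subst hkm
      calc |z i k + s * (1 / 2)| ≤ |z i k| + |s| * (1 / 2) := by
            simpa [abs_mul] using abs_add_le (z i k) (s * (1 / 2))
        _ ≤ 1 := by linarith [hm i]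
    · simpa using hzk
  have hmem : T u ∈ symmSet (T '' closedBall 0 1) x := mem_symmSet.2 fun i =>
    ⟨⟨z i + (1 : ℝ) • u, hball i 1 (by simp), by simp [hzx]⟩,
      ⟨z i + (-1 : ℝ) • u, hball i (-1) (by simp), by simp [hzx, sub_eq_add_neg]⟩⟩
  have hu_norm : 1 / 2 ≤ ‖u‖ := by simpa [hu] using u.norm_apply_le m
  calc a / 2 ≤ a * ‖u‖ := by nlinarith
    _ ≤ ‖T u‖ := hT u
    _ ≤ _ := norm_le_delta0
        (isBounded_symmSet (T.lipschitz.isBounded_image isBounded_closedBall) x)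
        hmem (neg_mem_symmSet hmem)

lemma exists_deltaInf_pos_of_containsC0 {E : Type*} [NormedAddCommGroup E] [NormedSpace ℝ E]
    (h : ContainsC0 E) :
    ∃ C : Set E, IsBounded C ∧ Convex ℝ C ∧ IsClosed C ∧ 0 < deltaInf C := by
  obtain ⟨T, a, ha, hT⟩ := h
  have hclosed : IsClosed (T '' closedBall 0 1) := by
    refine (T.isUniformEmbedding_of_bound (K := a⁻¹.toNNReal) fun z => ?_).isClosedEmbedding
      |>.isClosedMap _ isClosed_closedBall
    rw [Real.coe_toNNReal _ (inv_nonneg.2 ha.le), le_inv_mul_iff₀ ha]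
    exact hT z
  refine ⟨T '' closedBall 0 1, T.lipschitz.isBounded_image isBounded_closedBall,
    (convex_closedBall 0 1).linear_image T.toLinearMap, hclosed, (half_pos ha).trans_le ?_⟩
  exact le_deltaInf ⟨T 0, 0, mem_closedBall_self zero_le_one, rfl⟩ fun N x hx =>
    half_le_delta0_symmSet_image_closedBall ha.le hT hx

/-- TFAE: (i) `c₀` does not embed isomorphically into `X`;
(ii) `δ_∞(C) = 0` for every bounded `C ⊆ X`;
(iii) `δ_∞(C) = 0` for every bounded, convex, closed `C ⊆ X`. -/
theorem stmt7 :
    List.TFAE [¬ ContainsC0 X,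
      ∀ C : Set X, IsBounded C → deltaInf C = 0,
      ∀ C : Set X, IsBounded C → Convex ℝ C → IsClosed C → deltaInf C = 0] := by
  tfae_have 1 → 2 := fun h C hC => by
    by_contra hne
    have hpos := (deltaInf_nonneg C).lt_of_ne' hne
    obtain ⟨S, d, hS₀, hSC, hd, hS⟩ := exists_signTree_of_lt_deltaInf
      (nonempty_of_deltaInf_pos hpos) (half_pos hpos).le (half_lt_self hpos)
    exact h <| (wucWith_delta0_of_signTree hC hS₀ hSC hS).containsC0 (delta0_nonneg C)
      (half_pos hpos) fun n => (hd n).le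
  tfae_have 2 → 3 := fun h C hC _ _ => h C hC
  tfae_have 3 → 1 := fun h hX => by
    obtain ⟨C, hC, hconv, hcl, hpos⟩ := exists_deltaInf_pos_of_containsC0 hX
    exact hpos.ne' (h C hC hconv hcl)
  tfae_finish
end

section
/- (James distortion theorem) Let X be a real Banach space. If X contains an isomorphic copy of c₀, then X contains almost isometric copies of c₀: for every ε > 0 there exist a closed linear subspace Y ⊆ X and an isomorphism T : c₀ → Y with ‖T‖·‖T⁻¹‖ ≤ 1 + ε. -/
/-! For `T : c₀ → X` bounded below, let `t_N` be the norm of `T` on the sequences vanishing below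
`N`; the `t_N` decrease to some `t > 0`. Fix `η > 0` and `N₀` with `t_{N₀} ≤ t + η`. Past `N₀`
choose finitely supported, successive blocks `z_k` in the unit ball with `‖T z_k‖ > t - η`. Then
`S b = T (∑ b_k z_k)` satisfies `‖S b‖ ≤ (t + η) ‖b‖`, and writing `b = 2 b_m e_m - c` with
`|b_m| = ‖b‖ ≥ ‖c‖` gives `‖S b‖ ≥ 2 (t - η) ‖b‖ - (t + η) ‖b‖ = (t - 3η) ‖b‖`. Hence `S` is an
isomorphism onto its (closed) range with distortion `(t + η) / (t - 3η)`, as close to `1` as we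
like. -/

open Set Metric Bornology

variable {X : Type*} [NormedAddCommGroup X] [NormedSpace ℝ X] [CompleteSpace X]

open scoped ZeroAtInfty

open Filter Topology

theorem exists_closed_subspace_equiv_of_bounds {𝕜 E F : Type*} [NontriviallyNormedField 𝕜]
    [NormedAddCommGroup E] [NormedSpace 𝕜 E] [CompleteSpace E]
    [NormedAddCommGroup F] [NormedSpace 𝕜 F] (S : E →L[𝕜] F) {L U : ℝ} (hL : 0 < L) (hU : 0 ≤ U)
    (hlow : ∀ x, L * ‖x‖ ≤ ‖S x‖) (hup : ∀ x, ‖S x‖ ≤ U * ‖x‖) :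
    ∃ Y : Submodule 𝕜 F, IsClosed (Y : Set F) ∧
      ∃ e : E ≃L[𝕜] Y, ‖(e : E →L[𝕜] Y)‖ * ‖(e.symm : Y →L[𝕜] E)‖ ≤ U / L := by
  have hinv : ∀ x, ‖x‖ ≤ L⁻¹ * ‖S x‖ := fun x => by
    rw [inv_mul_eq_div, le_div_iff₀ hL, mul_comm]
    exact hlow x
  have hanti : AntilipschitzWith (Real.toNNReal L⁻¹) S :=
    S.antilipschitz_of_bound fun x => by
      rw [Real.coe_toNNReal _ (by positivity)]
      exact hinv x
  let e₀ := LinearEquiv.ofInjective (S : E →ₗ[𝕜] F) hanti.injective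
  have he₀ : ∀ x, ‖e₀ x‖ ≤ U * ‖x‖ := hup
  have he₀_symm : ∀ y, ‖e₀.symm y‖ ≤ L⁻¹ * ‖y‖ := fun y => by
    have hy : S (e₀.symm y) = y := congrArg Subtype.val (e₀.apply_symm_apply y)
    simpa [hy] using hinv (e₀.symm y)
  refine ⟨LinearMap.range (S : E →ₗ[𝕜] F), hanti.isClosed_range S.uniformContinuous,
    e₀.toContinuousLinearEquivOfBounds U L⁻¹ he₀ he₀_symm, ?_⟩
  rw [div_eq_mul_inv]
  exact mul_le_mul (ContinuousLinearMap.opNorm_le_bound _ hU he₀)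
    (ContinuousLinearMap.opNorm_le_bound _ (by positivity) he₀_symm) (norm_nonneg _) hU

namespace CZero

local notation "c₀" => C₀(ℕ, ℝ)

def ofTendsto (f : ℕ → ℝ) (hf : Tendsto f atTop (𝓝 0)) : c₀ :=
  ⟨⟨f, continuous_of_discreteTopology⟩, by rwa [cocompact_eq_cofinite, Nat.cofinite_eq_atTop]⟩

@[simp] lemma ofTendsto_apply (f : ℕ → ℝ) (hf : Tendsto f atTop (𝓝 0)) (n : ℕ) :
    ofTendsto f hf n = f n := rfl

lemma tendsto_atTop_zero (f : c₀) : Tendsto f atTop (𝓝 0) := by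
  simpa [cocompact_eq_cofinite, Nat.cofinite_eq_atTop] using f.zero_at_infty'

lemma abs_apply_le_norm (f : c₀) (n : ℕ) : |f n| ≤ ‖f‖ := by
  rw [← ZeroAtInftyContinuousMap.norm_toBCF_eq_norm]
  exact f.toBCF.norm_coe_le_norm n

lemma norm_le_of_forall_abs_apply_le (f : c₀) {C : ℝ} (hC : 0 ≤ C) (h : ∀ n, |f n| ≤ C) :
    ‖f‖ ≤ C := by
  rw [← ZeroAtInftyContinuousMap.norm_toBCF_eq_norm]
  exact (BoundedContinuousFunction.norm_le hC).mpr h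

lemma exists_abs_apply_eq_norm (f : c₀) : ∃ m, |f m| = ‖f‖ := by
  by_cases hf : f = 0
  · exact ⟨0, by simp [hf]⟩
  obtain ⟨n₀, hn₀⟩ : ∃ n, f n ≠ 0 := by
    by_contra! h
    exact hf (ZeroAtInftyContinuousMap.ext h)
  have hsmall : ∀ᶠ n in cocompact ℕ, |f n| ≤ |f n₀| := by
    rw [cocompact_eq_cofinite, Nat.cofinite_eq_atTop]
    have habs : Tendsto (fun n => |f n|) atTop (𝓝 0) := by simpa using (tendsto_atTop_zero f).abs
    exact (habs.eventually_lt_const (abs_pos.2 hn₀)).mono fun _ h => h.le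
  obtain ⟨m, hm⟩ :=
    (continuous_of_discreteTopology (f := fun n => |f n|)).exists_forall_ge' n₀ hsmall
  exact ⟨m, le_antisymm (abs_apply_le_norm f m)
    (norm_le_of_forall_abs_apply_le f (abs_nonneg _) hm)⟩

noncomputable def single (k : ℕ) : c₀ :=
  ofTendsto (Pi.single k 1) (tendsto_const_nhds.congr' <| by
    filter_upwards [eventually_gt_atTop k] with n hn
    simp [hn.ne'])

lemma single_apply (k n : ℕ) : single k n = if n = k then 1 else 0 := by
  simp [single, Pi.single_apply]

lemma norm_single (k : ℕ) : ‖single k‖ = 1 :=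
  le_antisymm
    (norm_le_of_forall_abs_apply_le _ zero_le_one fun n => by
      rw [single_apply]; split_ifs <;> simp)
    (by simpa [single_apply] using abs_apply_le_norm (single k) k)

noncomputable def truncate (M : ℕ) (f : c₀) : c₀ :=
  ofTendsto (fun n => if n < M then f n else 0) (tendsto_const_nhds.congr' <| by
    filter_upwards [eventually_ge_atTop M] with n hn
    simp [not_lt.2 hn])

lemma truncate_apply (M : ℕ) (f : c₀) (n : ℕ) : truncate M f n = if n < M then f n else 0 := rfl

lemma tendsto_truncate (f : c₀) : Tendsto (truncate · f) atTop (𝓝 f) := by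
  rw [Metric.tendsto_atTop]
  intro ε hε
  obtain ⟨M, hM⟩ := Metric.tendsto_atTop.1 (tendsto_atTop_zero f) (ε / 2) (half_pos hε)
  refine ⟨M, fun M' hM' => ?_⟩
  rw [dist_eq_norm]
  refine (norm_le_of_forall_abs_apply_le _ (half_pos hε).le fun n => ?_).trans_lt (half_lt_self hε)
  rw [ZeroAtInftyContinuousMap.sub_apply, truncate_apply]
  split_ifs with hn
  · simp [(half_pos hε).le]
  · have hfn := hM n (hM'.trans (not_lt.1 hn))
    rw [Real.dist_0_eq_abs] at hfn
    rw [zero_sub, abs_neg]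
    exact hfn.le

lemma norm_truncate_le (M : ℕ) (f : c₀) : ‖truncate M f‖ ≤ ‖f‖ :=
  norm_le_of_forall_abs_apply_le _ (norm_nonneg f) fun n => by
    rw [truncate_apply]
    split_ifs
    · exact abs_apply_le_norm f n
    · simp

def blockIndex (g : ℕ → ℕ) (n : ℕ) : ℕ := Nat.findGreatest (g · ≤ n) n

lemma blockIndex_eq {g : ℕ → ℕ} (hg : StrictMono g) {k n : ℕ} (hk : g k ≤ n)
    (hn : n < g (k + 1)) : blockIndex g n = k :=
  Nat.findGreatest_eq_iff.2 ⟨(hg.id_le k).trans hk, fun _ => hk, fun _ hj _ hgj =>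
    (hn.trans_le (hg.monotone hj)).not_ge hgj⟩

lemma tendsto_blockIndex {g : ℕ → ℕ} (hg : StrictMono g) : Tendsto (blockIndex g) atTop atTop :=
  tendsto_atTop.2 fun K => (eventually_ge_atTop (g K)).mono fun _ hn =>
    Nat.le_findGreatest ((hg.id_le K).trans hn) hn

lemma abs_mul_apply_le {z : ℕ → c₀} {κ : ℕ → ℕ} (hz : ∀ k, ‖z k‖ ≤ 1) (b : c₀) (n : ℕ) :
    |b (κ n) * z (κ n) n| ≤ |b (κ n)| := by
  rw [abs_mul]
  exact mul_le_of_le_one_right (abs_nonneg _) ((abs_apply_le_norm _ _).trans (hz _))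

section BlockMap

variable (z : ℕ → c₀) {κ : ℕ → ℕ} (hκ : Tendsto κ atTop atTop)

/-- With `κ n` the index of the block containing `n`, this is `b ↦ ∑ k, b k • z k` for blocks `z k`
with disjoint supports. -/
noncomputable def blockMap (hz : ∀ k, ‖z k‖ ≤ 1) : c₀ →L[ℝ] c₀ :=
  LinearMap.mkContinuous
    { toFun := fun b => ofTendsto (fun n => b (κ n) * z (κ n) n)
        (squeeze_zero_norm (abs_mul_apply_le hz b)
          (by simpa using ((tendsto_atTop_zero b).comp hκ).norm))
      map_add' := fun b c => by ext n; simp [add_mul]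
      map_smul' := fun r b => by ext n; simp [mul_assoc] }
    1 fun b => by
      rw [one_mul]
      exact norm_le_of_forall_abs_apply_le _ (norm_nonneg b) fun n =>
        (abs_mul_apply_le hz b n).trans (abs_apply_le_norm b _)

lemma blockMap_apply (hz : ∀ k, ‖z k‖ ≤ 1) (b : c₀) (n : ℕ) :
    blockMap z hκ hz b n = b (κ n) * z (κ n) n := rfl

lemma norm_blockMap_le (hz : ∀ k, ‖z k‖ ≤ 1) : ‖blockMap z hκ hz‖ ≤ 1 :=
  LinearMap.mkContinuous_norm_le _ zero_le_one _

lemma blockMap_single (hz : ∀ k, ‖z k‖ ≤ 1) (hsupp : ∀ k n, z k n ≠ 0 → κ n = k) (k : ℕ) :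
    blockMap z hκ hz (single k) = z k := by
  ext n
  rw [blockMap_apply, single_apply]
  split_ifs with h
  · rw [h, one_mul]
  · rw [zero_mul, eq_comm]
    exact not_imp_comm.1 (hsupp k n) h

end BlockMap

section Operator

variable {E : Type*} [NormedAddCommGroup E] [NormedSpace ℝ E] (T : c₀ →L[ℝ] E)

lemma norm_two_mul_smul_single_sub_le (b : c₀) {m : ℕ} (hm : |b m| = ‖b‖) :
    ‖(2 * b m) • single m - b‖ ≤ ‖b‖ :=
  norm_le_of_forall_abs_apply_le _ (norm_nonneg b) fun n => by
    by_cases h : n = m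
    · subst h
      simp only [ZeroAtInftyContinuousMap.sub_apply, ZeroAtInftyContinuousMap.smul_apply,
        single_apply, if_pos, smul_eq_mul]
      rw [show 2 * b n * 1 - b n = b n by ring, hm]
    · simp [single_apply, h, abs_apply_le_norm]

/-- James' trick: `b = (2 b_m) e_m - c` with `‖c‖ ≤ ‖b‖` for a coordinate `m` where
`|b_m| = ‖b‖`. -/
lemma mul_norm_le_norm_apply {S : c₀ →L[ℝ] E} {α β : ℝ} (hβ : ∀ b, ‖S b‖ ≤ β * ‖b‖)
    (hα : ∀ k, α ≤ ‖S (single k)‖) (b : c₀) : (2 * α - β) * ‖b‖ ≤ ‖S b‖ := by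
  have hβ0 : 0 ≤ β := by simpa [norm_single] using (norm_nonneg _).trans (hβ (single 0))
  obtain ⟨m, hm⟩ := exists_abs_apply_eq_norm b
  set c := (2 * b m) • single m - b
  have hb : S b = (2 * b m) • S (single m) - S c := by simp [c]
  have hSc : ‖S c‖ ≤ β * ‖b‖ :=
    (hβ c).trans (mul_le_mul_of_nonneg_left (norm_two_mul_smul_single_sub_le b hm) hβ0)
  calc (2 * α - β) * ‖b‖ ≤ ‖(2 * b m) • S (single m)‖ - ‖S c‖ := by
        rw [norm_smul, Real.norm_eq_abs, abs_mul, abs_two, hm]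
        nlinarith [hα m, norm_nonneg b]
    _ ≤ ‖S b‖ := hb ▸ norm_sub_norm_le _ _

def tailBall (N : ℕ) : Set c₀ := {z | ‖z‖ ≤ 1 ∧ ∀ n < N, z n = 0}

noncomputable def tailNorm (N : ℕ) : ℝ := sSup ((‖T ·‖) '' tailBall N)

lemma zero_mem_tailBall (N : ℕ) : (0 : c₀) ∈ tailBall N := ⟨by simp, fun _ _ => rfl⟩

lemma bddAbove_norm_image_tailBall (N : ℕ) : BddAbove ((‖T ·‖) '' tailBall N) :=
  ⟨‖T‖, by
    rintro _ ⟨z, hz, rfl⟩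
    simpa using T.le_of_opNorm_le le_rfl z |>.trans (mul_le_of_le_one_right (norm_nonneg T) hz.1)⟩

lemma norm_apply_le_tailNorm {N : ℕ} {z : c₀} (hz : z ∈ tailBall N) : ‖T z‖ ≤ tailNorm T N :=
  le_csSup (bddAbove_norm_image_tailBall T N) ⟨z, hz, rfl⟩

lemma tailNorm_nonneg (N : ℕ) : 0 ≤ tailNorm T N := by
  simpa using norm_apply_le_tailNorm T (zero_mem_tailBall N)

lemma norm_apply_le_tailNorm_mul {N : ℕ} {z : c₀} (hz : ∀ n < N, z n = 0) :
    ‖T z‖ ≤ tailNorm T N * ‖z‖ := by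
  rcases eq_or_ne z 0 with rfl | hz0
  · simp
  have hmem : ‖z‖⁻¹ • z ∈ tailBall N :=
    ⟨by rw [norm_smul, norm_inv, norm_norm, inv_mul_cancel₀ (norm_ne_zero_iff.2 hz0)],
      fun n hn => by simp [hz n hn]⟩
  calc ‖T z‖ = ‖T (‖z‖⁻¹ • z)‖ * ‖z‖ := by
        rw [map_smul, norm_smul, norm_inv, norm_norm]
        field_simp
    _ ≤ tailNorm T N * ‖z‖ := by gcongr; exact norm_apply_le_tailNorm T hmem

lemma le_tailNorm {a : ℝ} (hT : ∀ z, a * ‖z‖ ≤ ‖T z‖) (N : ℕ) : a ≤ tailNorm T N := by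
  have hmem : single N ∈ tailBall N :=
    ⟨(norm_single N).le, fun n hn => by simp [single_apply, hn.ne]⟩
  simpa [norm_single] using (hT (single N)).trans (norm_apply_le_tailNorm T hmem)

lemma exists_finite_support_of_lt_tailNorm {α : ℝ} {N : ℕ} (h : α < tailNorm T N) :
    ∃ z ∈ tailBall N, ∃ M, (∀ n, M ≤ n → z n = 0) ∧ α < ‖T z‖ := by
  obtain ⟨_, ⟨z, hz, rfl⟩, hαz⟩ := exists_lt_of_lt_csSup
    (Set.Nonempty.image _ ⟨0, zero_mem_tailBall N⟩) h
  have hlim : Tendsto (fun M => ‖T (truncate M z)‖) atTop (𝓝 ‖T z‖) :=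
    ((T.continuous.tendsto z).comp (tendsto_truncate z)).norm
  obtain ⟨M, hM⟩ := (hlim.eventually_const_lt hαz).exists
  refine ⟨truncate M z, ⟨(norm_truncate_le M z).trans hz.1, fun n hn => ?_⟩, M, fun n hn => ?_,
    hM⟩
  · simp [truncate_apply, hz.2 n hn]
  · simp [truncate_apply, not_lt.2 hn]

lemma exists_blocks {α : ℝ} (hα : ∀ N, α < tailNorm T N) (N₀ : ℕ) :
    ∃ (z : ℕ → c₀) (κ : ℕ → ℕ), Tendsto κ atTop atTop ∧ (∀ k n, z k n ≠ 0 → κ n = k) ∧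
      ∀ k, z k ∈ tailBall N₀ ∧ α < ‖T (z k)‖ := by
  choose w hw M hM hTw using fun N => exists_finite_support_of_lt_tailNorm T (hα N)
  let g : ℕ → ℕ := fun k => Nat.rec N₀ (fun _ gk => max (gk + 1) (M gk)) k
  have hg_succ : ∀ k, g (k + 1) = max (g k + 1) (M (g k)) := fun _ => rfl
  have hg : StrictMono g := strictMono_nat_of_lt_succ fun k => by rw [hg_succ]; omega
  refine ⟨fun k => w (g k), blockIndex g, tendsto_blockIndex hg,
    fun k n hn => blockIndex_eq hg ?_ ?_,
    fun k => ⟨⟨(hw _).1, fun n hn => (hw _).2 n (hn.trans_le (hg.monotone k.zero_le))⟩, hTw _⟩⟩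
  · by_contra! h
    exact hn ((hw _).2 n h)
  · by_contra! h
    exact hn (hM _ n ((le_max_right _ _).trans (hg_succ k ▸ h)))

lemma exists_embedding_of_lt_tailNorm {α β : ℝ} {N₀ : ℕ} (hα : ∀ N, α < tailNorm T N)
    (hβ : tailNorm T N₀ ≤ β) :
    ∃ S : c₀ →L[ℝ] E, (∀ b, ‖S b‖ ≤ β * ‖b‖) ∧ ∀ k, α ≤ ‖S (single k)‖ := by
  obtain ⟨z, κ, hκ, hsupp, hz⟩ := exists_blocks T hα N₀
  have hz1 : ∀ k, ‖z k‖ ≤ 1 := fun k => (hz k).1.1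
  refine ⟨T.comp (blockMap z hκ hz1), fun b => ?_, fun k => ?_⟩
  · calc ‖T (blockMap z hκ hz1 b)‖ ≤ tailNorm T N₀ * ‖blockMap z hκ hz1 b‖ :=
          norm_apply_le_tailNorm_mul T fun n hn => by simp [blockMap_apply, (hz (κ n)).1.2 n hn]
      _ ≤ β * ‖b‖ := by
          gcongr
          · exact (tailNorm_nonneg T N₀).trans hβ
          · simpa using (blockMap z hκ hz1).le_of_opNorm_le (norm_blockMap_le z hκ hz1) b
  · simpa [blockMap_single z hκ hz1 hsupp] using (hz k).2.le

theorem exists_almost_isometric_embedding (h : ContainsC0 E) {ε : ℝ} (hε : 0 < ε) :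
    ∃ S : c₀ →L[ℝ] E, ∃ L > 0, ∀ b, L * ‖b‖ ≤ ‖S b‖ ∧ ‖S b‖ ≤ (1 + ε) * L * ‖b‖ := by
  obtain ⟨T, a, ha, hT⟩ := h
  set t := ⨅ N, tailNorm T N
  have hbdd : BddBelow (Set.range (tailNorm T)) := ⟨a, Set.forall_mem_range.2 (le_tailNorm T hT)⟩
  have ht : 0 < t := ha.trans_le (le_ciInf (le_tailNorm T hT))
  -- chosen so that `t + η = (1 + ε) * (t - 3 * η)`
  set η := ε * t / (4 + 3 * ε)
  have hη : 0 < η := by positivity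
  obtain ⟨N₀, hN₀⟩ := exists_lt_of_ciInf_lt (lt_add_of_pos_right t hη)
  obtain ⟨S, hβ, hα⟩ := exists_embedding_of_lt_tailNorm T (α := t - η)
    (fun N => (sub_lt_self t hη).trans_le (ciInf_le hbdd N)) hN₀.le
  have hη_eq : t + η = (1 + ε) * (t - 3 * η) := by
    simp only [η]
    field_simp
    ring
  refine ⟨S, t - 3 * η, by nlinarith, fun b => ⟨?_, ?_⟩⟩
  · linarith [mul_norm_le_norm_apply hβ hα b]
  · rw [← hη_eq]
    exact hβ b

end Operator

end CZero

/-- James distortion theorem: if `X` contains an isomorphic copy of `c₀`, then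
for every `ε > 0` there are a closed subspace `Y ⊆ X` and an isomorphism `T : c₀ → Y` with
`‖T‖·‖T⁻¹‖ ≤ 1 + ε`. -/
theorem stmt9 (h : ContainsC0 X) :
    ∀ ε : ℝ, 0 < ε → ∃ Y : Submodule ℝ X, IsClosed (Y : Set X) ∧
      ∃ T : C₀(ℕ, ℝ) ≃L[ℝ] Y,
        ‖(T : C₀(ℕ, ℝ) →L[ℝ] Y)‖ * ‖(T.symm : Y →L[ℝ] C₀(ℕ, ℝ))‖ ≤ 1 + ε := by
  intro ε hε
  obtain ⟨S, L, hL, hS⟩ := CZero.exists_almost_isometric_embedding h hε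
  obtain ⟨Y, hY, e, he⟩ := exists_closed_subspace_equiv_of_bounds S hL (by positivity)
    (fun b => (hS b).1) (fun b => (hS b).2)
  exact ⟨Y, hY, e, he.trans_eq (mul_div_cancel_right₀ _ hL.ne')⟩
end

section
/- (Bessaga–Pełczyński) Let X be a real Banach space not containing an isomorphic copy of c₀, and let (xₙ)_{n∈ℕ} be a sequence in X such that the series Σₙ xₙ is weakly unconditionally Cauchy, i.e., Σₙ |x*(xₙ)| < ∞ for every x* ∈ X*. Then the series Σₙ xₙ converges unconditionally: for every choice of signs θₙ ∈ {−1, 1}, the series Σₙ θₙ xₙ converges in X. -/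
open Set Metric Bornology

variable {X : Type*} [NormedAddCommGroup X] [NormedSpace ℝ X] [CompleteSpace X]

open scoped ZeroAtInfty

open Function Filter Topology

/-!
Suppose some signed series `∑ θₙ xₙ` does not converge. Its partial sums are not Cauchy, so there
are disjoint blocks `z_k` of it with `‖z_k‖ ≥ ε`. The uniform boundedness principle gives
`∑ₙ |f xₙ| ≤ M ‖f‖`, the blocks inherit this bound, and hence `ζ ↦ ∑ ζ_k z_k` is a bounded operator
from `c₀` to `X`. Choose norming functionals `f_k` of the `z_k`: the matrix `|f_k z_j|` has row
sums at most `M`, so by Rosenthal's lemma there is a subsequence along which its off-diagonal row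
sums are at most `ε / 2`. Along it, `f_l` recovers the `l`-th coefficient of `∑ ζ_k z_k` up to an
error `(ε / 2) ‖ζ‖`, so the operator is bounded below by `ε / 2`, and `X` contains `c₀`.
-/

theorem ZeroAtInftyContinuousMap.abs_apply_le_norm {α : Type*} [TopologicalSpace α]
    (ζ : C₀(α, ℝ)) (a : α) : |ζ a| ≤ ‖ζ‖ :=
  (ζ.toBCF.norm_coe_le_norm a).trans_eq ZeroAtInftyContinuousMap.norm_toBCF_eq_norm

theorem exists_pairwise_disjoint_blocks_of_not_cauchySeq {E : Type*} [SeminormedAddCommGroup E]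
    {y : ℕ → E} (hy : ¬ CauchySeq fun N => ∑ n ∈ Finset.range N, y n) :
    ∃ ε > 0, ∃ I : ℕ → Finset ℕ, Pairwise (Disjoint on I) ∧ ∀ k, ε ≤ ‖∑ n ∈ I k, y n‖ := by
  rw [Metric.cauchySeq_iff'] at hy
  push Not at hy
  obtain ⟨ε, hε, h⟩ := hy
  choose next hnext hdist using h
  let a : ℕ → ℕ := fun k => next^[k] 0
  have ha_succ : ∀ k, a (k + 1) = next (a k) := fun k => iterate_succ_apply' next k 0
  have ha : Monotone a := monotone_nat_of_le_succ fun k => (ha_succ k).symm ▸ hnext (a k)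
  refine ⟨ε, hε, fun k => Finset.Ico (a k) (a (k + 1)), fun k l hkl => ?_, fun k => ?_⟩
  · rw [onFun, ← Finset.disjoint_coe, Finset.coe_Ico, Finset.coe_Ico]
    exact ha.pairwise_disjoint_on_Ico_succ hkl
  · simpa [ha_succ, dist_eq_norm, Finset.sum_Ico_eq_sub _ (hnext (a k))] using hdist (a k)

theorem Set.Infinite.exists_pairwise_disjoint_infinite_subsets {α : Type*} {T : Set α}
    (hT : T.Infinite) :
    ∃ P : ℕ → Set α, (∀ i, P i ⊆ T) ∧ (∀ i, (P i).Infinite) ∧ Pairwise (Disjoint on P) := by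
  let f : ℕ → ℕ → α := fun i j => hT.natEmbedding T (Nat.pair i j)
  have hf : ∀ i j i' j', f i j = f i' j' → i = i' ∧ j = j' := fun i j i' j' h =>
    Nat.pair_eq_pair.1 <| (hT.natEmbedding T).injective (Subtype.val_injective h)
  refine ⟨fun i => range (f i), ?_, fun i => ?_, fun i i' hii' => ?_⟩
  · rintro i _ ⟨j, rfl⟩
    exact Subtype.coe_prop _
  · exact infinite_range_of_injective fun j j' h => (hf i j i j' h).2
  · rw [onFun, Set.disjoint_left]
    rintro _ ⟨j, rfl⟩ ⟨j', h⟩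
    exact hii' (hf i' j' i j h).1.symm

section Rosenthal

variable {α : Type*} (A : α → α → ℝ) {ε : ℝ}

def HasMassOff (T : Set α) (r : ℝ) : Prop :=
  ∀ k ∈ T, ∃ B : Finset α, Disjoint (B : Set α) T ∧ r ≤ ∑ j ∈ B, A k j

/-- Split `T` into infinitely many infinite pieces and pick a bad row in each: the extra mass it
finds inside its own piece avoids all the other chosen rows. -/
theorem exists_infinite_hasMassOff_add
    (hbad : ∀ T : Set α, T.Infinite → ∃ k ∈ T, ∃ G : Finset α, ↑G ⊆ T \ {k} ∧ ε < ∑ j ∈ G, A k j)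
    {T : Set α} (hT : T.Infinite) {r : ℝ} (hr : HasMassOff A T r) :
    ∃ T' : Set α, T'.Infinite ∧ HasMassOff A T' (r + ε) := by
  classical
  obtain ⟨P, hPT, hPinf, hPdisj⟩ := hT.exists_pairwise_disjoint_infinite_subsets
  choose k hkP G hGP hG using fun i => hbad (P i) (hPinf i)
  have hk : Injective k := fun i i' h => by_contra fun hii' =>
    Set.disjoint_left.1 (hPdisj hii') (hkP i) (h ▸ hkP i')
  refine ⟨range k, infinite_range_of_injective hk, ?_⟩
  rintro _ ⟨i, rfl⟩
  obtain ⟨B, hBT, hB⟩ := hr (k i) (hPT i (hkP i))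
  have hGT : Disjoint (G i : Set α) (range k) := by
    rw [Set.disjoint_right]
    rintro _ ⟨i', rfl⟩ hi'
    obtain ⟨hi'P, hi'k⟩ := hGP i hi'
    obtain rfl : i' = i := by_contra fun hii' => Set.disjoint_left.1 (hPdisj hii') (hkP i') hi'P
    exact hi'k rfl
  have hBG : Disjoint B (G i) :=
    Finset.disjoint_coe.1 <| hBT.mono_right fun _ hj => hPT i (hGP i hj).1
  refine ⟨B ∪ G i, ?_, ?_⟩
  · rw [Finset.coe_union, Set.disjoint_union_left]
    exact ⟨hBT.mono_right (range_subset_iff.2 fun i' => hPT i' (hkP i')), hGT⟩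
  · rw [Finset.sum_union hBG]
    linarith [hG i]

/-- Rosenthal's lemma. Otherwise every infinite set is bad, and iterating the previous step yields a
row carrying mass more than `M`. -/
theorem exists_infinite_sum_offDiag_le [Infinite α] {M : ℝ}
    (hM : ∀ k (G : Finset α), ∑ j ∈ G, A k j ≤ M) (hε : 0 < ε) :
    ∃ S : Set α, S.Infinite ∧ ∀ k ∈ S, ∀ G : Finset α, ↑G ⊆ S \ {k} → ∑ j ∈ G, A k j ≤ ε := by
  by_contra hbad
  push Not at hbad
  have heavy : ∀ n : ℕ, ∃ T : Set α, T.Infinite ∧ HasMassOff A T (n * ε) := by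
    intro n
    induction n with
    | zero => exact ⟨univ, infinite_univ, fun k _ => ⟨∅, by simp⟩⟩
    | succ n ih =>
      obtain ⟨T, hT, hTn⟩ := ih
      simpa [add_mul] using exists_infinite_hasMassOff_add A hbad hT hTn
  obtain ⟨n, hn⟩ := exists_nat_gt (M / ε)
  obtain ⟨T, hT, hTn⟩ := heavy n
  obtain ⟨B, -, hB⟩ := hTn _ hT.nonempty.some_mem
  linarith [hM hT.nonempty.some B, (div_lt_iff₀ hε).1 hn]

theorem exists_injective_sum_offDiag_le [Infinite α] {M : ℝ}
    (hM : ∀ k (G : Finset α), ∑ j ∈ G, A k j ≤ M) (hε : 0 < ε) :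
    ∃ e : ℕ → α, Injective e ∧ ∀ l (G : Finset ℕ), l ∉ G → ∑ j ∈ G, A (e l) (e j) ≤ ε := by
  classical
  obtain ⟨S, hS, hSε⟩ := exists_infinite_sum_offDiag_le A hM hε
  let e : ℕ → α := fun j => hS.natEmbedding S j
  have he : Injective e := Subtype.val_injective.comp (hS.natEmbedding S).injective
  refine ⟨e, he, fun l G hl => ?_⟩
  rw [← Finset.sum_image he.injOn]
  refine hSε _ (Subtype.coe_prop _) _ fun _ hj => ?_
  obtain ⟨j, hjG, rfl⟩ := Finset.mem_image.1 (Finset.mem_coe.1 hj)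
  exact ⟨Subtype.coe_prop _, fun hjl => hl (he hjl ▸ hjG)⟩

end Rosenthal

section WUC

variable {E : Type*} [NormedAddCommGroup E] [NormedSpace ℝ E] {ι κ : Type*}

def HasWUCBound (x : ι → E) (M : ℝ) : Prop :=
  ∀ f : E →L[ℝ] ℝ, ∀ F : Finset ι, ∑ n ∈ F, |f (x n)| ≤ M * ‖f‖

theorem exists_hasWUCBound (x : ι → E) (hx : ∀ f : E →L[ℝ] ℝ, Summable fun n => |f (x n)|) :
    ∃ M, 0 ≤ M ∧ HasWUCBound x M := by
  -- uniform boundedness for the finite partial sums, viewed in the bidual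
  let g : Finset ι → (E →L[ℝ] ℝ) →L[ℝ] ℝ := fun G => ContinuousLinearMap.apply ℝ ℝ (∑ n ∈ G, x n)
  have hg : ∀ G f, ‖g G f‖ ≤ ∑ n ∈ G, |f (x n)| := fun G f => by
    simpa [g] using Finset.abs_sum_le_sum_abs (fun n => f (x n)) G
  obtain ⟨C, hC⟩ := banach_steinhaus fun f =>
    ⟨∑' n, |f (x n)|, fun G => (hg G f).trans ((hx f).sum_le_tsum G fun n _ => abs_nonneg _)⟩
  have hC0 : 0 ≤ C := (norm_nonneg _).trans (hC ∅)
  have hgf : ∀ (G : Finset ι) (f : E →L[ℝ] ℝ), |f (∑ n ∈ G, x n)| ≤ C * ‖f‖ := fun G f =>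
    ((g G).le_opNorm f).trans (mul_le_mul_of_nonneg_right (hC G) (norm_nonneg f))
  refine ⟨2 * C, by positivity, fun f F => ?_⟩
  classical
  set P := F.filter (fun n => 0 ≤ f (x n))
  set N := F.filter (fun n => ¬ 0 ≤ f (x n))
  have hsplit : ∑ n ∈ F, |f (x n)| = f (∑ n ∈ P, x n) - f (∑ n ∈ N, x n) := by
    rw [map_sum, map_sum, ← Finset.sum_filter_add_sum_filter_not F (fun n => 0 ≤ f (x n)),
      Finset.sum_congr rfl fun n hn => abs_of_nonneg (Finset.mem_filter.1 hn).2,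
      Finset.sum_congr rfl fun n hn => abs_of_neg (not_le.1 (Finset.mem_filter.1 hn).2),
      Finset.sum_neg_distrib, sub_eq_add_neg]
  linarith [le_abs_self (f (∑ n ∈ P, x n)), neg_abs_le (f (∑ n ∈ N, x n)), hgf P f, hgf N f]

namespace HasWUCBound

variable {x : ι → E} {M : ℝ}

theorem norm_sum_smul_le (hx : HasWUCBound x M) (hM : 0 ≤ M) {F : Finset ι} {c : ι → ℝ} {C : ℝ}
    (hC : 0 ≤ C) (hc : ∀ n ∈ F, |c n| ≤ C) : ‖∑ n ∈ F, c n • x n‖ ≤ M * C := by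
  refine NormedSpace.norm_le_dual_bound ℝ _ (by positivity) fun f => ?_
  calc ‖f (∑ n ∈ F, c n • x n)‖ ≤ ∑ n ∈ F, |c n| * |f (x n)| := by
        simpa [abs_mul] using Finset.abs_sum_le_sum_abs (fun n => c n * f (x n)) F
    _ ≤ ∑ n ∈ F, C * |f (x n)| :=
        Finset.sum_le_sum fun n hn => mul_le_mul_of_nonneg_right (hc n hn) (abs_nonneg _)
    _ ≤ C * (M * ‖f‖) := by rw [← Finset.mul_sum]; exact mul_le_mul_of_nonneg_left (hx f F) hC
    _ = M * C * ‖f‖ := by ring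

theorem smul (hx : HasWUCBound x M) {θ : ι → ℝ} (hθ : ∀ n, |θ n| ≤ 1) :
    HasWUCBound (fun n => θ n • x n) M := fun f F =>
  calc ∑ n ∈ F, |f (θ n • x n)| ≤ ∑ n ∈ F, |f (x n)| := Finset.sum_le_sum fun n _ => by
        simpa [abs_mul] using mul_le_of_le_one_left (abs_nonneg _) (hθ n)
    _ ≤ M * ‖f‖ := hx f F

theorem sum_blocks (hx : HasWUCBound x M) {I : κ → Finset ι} (hI : Pairwise (Disjoint on I)) :
    HasWUCBound (fun k => ∑ n ∈ I k, x n) M := by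
  classical
  intro f G
  calc ∑ k ∈ G, |f (∑ n ∈ I k, x n)| ≤ ∑ k ∈ G, ∑ n ∈ I k, |f (x n)| :=
        Finset.sum_le_sum fun k _ => by simpa using Finset.abs_sum_le_sum_abs (fun n => f (x n)) _
    _ = ∑ n ∈ G.biUnion I, |f (x n)| := (Finset.sum_biUnion (hI.set_pairwise _)).symm
    _ ≤ M * ‖f‖ := hx f _

theorem comp_injective (hx : HasWUCBound x M) {e : κ → ι} (he : Injective e) :
    HasWUCBound (x ∘ e) M := fun f G => by
  classical
  simpa [Finset.sum_image he.injOn] using hx f (G.image e)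

end HasWUCBound

theorem abs_mul_le_norm_sum_smul_add [DecidableEq ι] {x : ι → E} {φ : E →L[ℝ] ℝ} (hφ : ‖φ‖ ≤ 1)
    {J : Finset ι} {l : ι} (hl : l ∈ J) {c : ι → ℝ} {C : ℝ} (hc : ∀ j ∈ J, |c j| ≤ C) :
    |c l| * |φ (x l)| ≤ ‖∑ j ∈ J, c j • x j‖ + C * ∑ j ∈ J.erase l, |φ (x j)| := by
  have hsplit : c l * φ (x l) = φ (∑ j ∈ J, c j • x j) - ∑ j ∈ J.erase l, c j * φ (x j) := by
    simp [map_sum, ← Finset.add_sum_erase J _ hl]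
  have hφv : |φ (∑ j ∈ J, c j • x j)| ≤ ‖∑ j ∈ J, c j • x j‖ :=
    (φ.le_opNorm _).trans (mul_le_of_le_one_left (norm_nonneg _) hφ)
  have hrest : |∑ j ∈ J.erase l, c j * φ (x j)| ≤ C * ∑ j ∈ J.erase l, |φ (x j)| := by
    rw [Finset.mul_sum]
    refine (Finset.abs_sum_le_sum_abs _ _).trans (Finset.sum_le_sum fun j hj => ?_)
    rw [abs_mul]
    exact mul_le_mul_of_nonneg_right (hc j (Finset.mem_of_mem_erase hj)) (abs_nonneg _)
  rw [← abs_mul, hsplit]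
  exact (abs_sub _ _).trans (add_le_add hφv hrest)

section c0

variable [CompleteSpace E] {w : ι → E} {M : ℝ}

theorem HasWUCBound.summable_smul (hw : HasWUCBound w M) (hM : 0 ≤ M) {ζ : ι → ℝ}
    (hζ : Tendsto ζ cofinite (𝓝 0)) : Summable fun j => ζ j • w j := by
  rw [summable_iff_vanishing_norm]
  intro δ hδ
  set η := δ / (M + 1)
  have hη : 0 < η := by positivity
  have hMη : M * η < δ := by
    rw [mul_div_assoc', div_lt_iff₀ (by positivity)]
    nlinarith
  have hfin : {j | ¬ |ζ j| < η}.Finite := by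
    simpa [Real.dist_eq] using Metric.tendsto_nhds.1 hζ η hη
  refine ⟨hfin.toFinset, fun t ht => (hw.norm_sum_smul_le hM hη.le fun j hj => ?_).trans_lt hMη⟩
  exact (by_contra fun hj' => Finset.disjoint_left.1 ht hj (hfin.mem_toFinset.2 hj')).le

theorem HasWUCBound.exists_c0_map {w : ℕ → E} (hw : HasWUCBound w M) (hM : 0 ≤ M) :
    ∃ T : C₀(ℕ, ℝ) →L[ℝ] E, ∀ ζ, HasSum (fun j => ζ j • w j) (T ζ) := by
  have hs : ∀ ζ : C₀(ℕ, ℝ), Summable fun j => ζ j • w j := fun ζ =>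
    hw.summable_smul hM (by simpa [Nat.cofinite_eq_atTop] using ζ.zero_at_infty')
  let L : C₀(ℕ, ℝ) →ₗ[ℝ] E :=
    { toFun := fun ζ => ∑' j, ζ j • w j
      map_add' := fun ζ η => by
        simpa only [ZeroAtInftyContinuousMap.coe_add, Pi.add_apply, add_smul] using
          ((hs ζ).hasSum.add (hs η).hasSum).tsum_eq
      map_smul' := fun c ζ => by
        simpa only [ZeroAtInftyContinuousMap.coe_smul, Pi.smul_apply, smul_eq_mul, mul_smul,
          RingHom.id_apply] using
          ((hs ζ).hasSum.const_smul c).tsum_eq }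
  refine ⟨L.mkContinuous M fun ζ => ?_, fun ζ => (hs ζ).hasSum⟩
  exact le_of_tendsto' (hs ζ).hasSum.norm fun F =>
    hw.norm_sum_smul_le hM (norm_nonneg ζ) fun j _ => ζ.abs_apply_le_norm j

theorem containsC0_of_offDiag_le {w : ℕ → E} (hw : HasWUCBound w M) (hM : 0 ≤ M)
    {g : ℕ → E →L[ℝ] ℝ} (hg : ∀ l, ‖g l‖ ≤ 1) {ε δ : ℝ} (hgw : ∀ l, ε ≤ |g l (w l)|)
    (hoff : ∀ l (G : Finset ℕ), l ∉ G → ∑ j ∈ G, |g l (w j)| ≤ δ) (hδε : δ < ε) :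
    ContainsC0 E := by
  obtain ⟨T, hT⟩ := hw.exists_c0_map hM
  have hδ : 0 ≤ δ := by simpa using hoff 0 ∅ (Finset.notMem_empty 0)
  have hε : 0 < ε := hδ.trans_lt hδε
  refine ⟨T, ε - δ, sub_pos.2 hδε, fun ζ => ?_⟩
  have hl : ∀ l, |ζ l| ≤ (‖T ζ‖ + ‖ζ‖ * δ) / ε := fun l => by
    rw [le_div_iff₀ hε]
    refine ge_of_tendsto ((hT ζ).norm.add_const _) ?_
    filter_upwards [eventually_ge_atTop {l}] with J hJ
    have hlJ : l ∈ J := Finset.singleton_subset_iff.1 hJ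
    calc |ζ l| * ε ≤ |ζ l| * |g l (w l)| := mul_le_mul_of_nonneg_left (hgw l) (abs_nonneg _)
      _ ≤ ‖∑ j ∈ J, ζ j • w j‖ + ‖ζ‖ * ∑ j ∈ J.erase l, |g l (w j)| :=
        abs_mul_le_norm_sum_smul_add (hg l) hlJ fun j _ => ζ.abs_apply_le_norm j
      _ ≤ ‖∑ j ∈ J, ζ j • w j‖ + ‖ζ‖ * δ := by
        gcongr
        exact hoff l _ (Finset.notMem_erase l J)
  have hζ : ‖ζ‖ ≤ (‖T ζ‖ + ‖ζ‖ * δ) / ε := by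
    rw [← ZeroAtInftyContinuousMap.norm_toBCF_eq_norm]
    exact (BoundedContinuousFunction.norm_le (by positivity)).2 fun l => hl l
  rw [le_div_iff₀ hε] at hζ
  linarith

end c0

end WUC

/-- Bessaga–Pełczyński: if `X` contains no copy of `c₀` and `∑ₙ xₙ` is weakly
unconditionally Cauchy, then for every choice of signs `θₙ ∈ {-1, 1}` the series `∑ₙ θₙ xₙ`
converges in `X`. -/
theorem stmt10 (h : ¬ ContainsC0 X) (x : ℕ → X)
    (hwuC : ∀ f : X →L[ℝ] ℝ, Summable fun n => |f (x n)|) :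
    ∀ θ : ℕ → ℝ, (∀ n, θ n = 1 ∨ θ n = -1) →
      ∃ s : X, Filter.Tendsto (fun N => ∑ n ∈ Finset.range N, θ n • x n)
        Filter.atTop (nhds s) := by
  intro θ hθ
  obtain ⟨M, hM0, hM⟩ := exists_hasWUCBound x hwuC
  have hy : HasWUCBound (fun n => θ n • x n) M :=
    hM.smul fun n => by rcases hθ n with hθn | hθn <;> simp [hθn]
  refine cauchySeq_tendsto_of_complete (by_contra fun hnc => h ?_)
  obtain ⟨ε, hε, I, hI, hIε⟩ := exists_pairwise_disjoint_blocks_of_not_cauchySeq hnc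
  set z : ℕ → X := fun k => ∑ n ∈ I k, θ n • x n
  have hz : HasWUCBound z M := hy.sum_blocks hI
  choose f hf1 hfz using fun k => exists_dual_vector ℝ (z k) (hε.trans_le (hIε k)).ne'
  obtain ⟨e, he, hoff⟩ := exists_injective_sum_offDiag_le (fun k j => |f k (z j)|)
    (fun k G => by simpa [hf1 k] using hz (f k) G) (half_pos hε)
  exact containsC0_of_offDiag_le (hz.comp_injective he) hM0 (g := f ∘ e)
    (fun l => (hf1 (e l)).le) (fun l => by simpa [hfz] using hIε (e l)) hoff (half_lt_self hε)
end

section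
/- Let X be a real Banach space and A ⊆ X a bounded set. If δ₁(A) > ε > 0, then A contains a 2ε-tree, i.e., there is a sequence (xₙ)_{n∈ℕ} in A with xₙ = (x_{2n} + x_{2n+1})/2 and ‖x_{2n} − x_{2n+1}‖ ≥ 2ε for every n ∈ ℕ. -/
open Set Metric Bornology

variable {X : Type*} [NormedAddCommGroup X] [NormedSpace ℝ X] [CompleteSpace X]

/-- An `ε`-tree in `A`: a sequence `(xₙ)_{n ≥ 1}` in `A` with `xₙ = (x_{2n} + x_{2n+1})/2` and
`‖x_{2n} - x_{2n+1}‖ ≥ ε` for every `n ≥ 1`. -/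
def IsTree (ε : ℝ) (A : Set X) (x : ℕ → X) : Prop :=
  (∀ n, 1 ≤ n → x n ∈ A) ∧
  ∀ n, 1 ≤ n →
    x n = (2⁻¹ : ℝ) • (x (2 * n) + x (2 * n + 1)) ∧ ε ≤ ‖x (2 * n) - x (2 * n + 1)‖

/-! Every point `a` of `A` is the midpoint of `a ± d` for any `d ∈ (A - a) ∩ (a - A)`, and
`δ₁(A) > ε` provides such a `d` with `‖d‖ > ε`. Choosing these children for every point of `A`
and iterating from any starting point grows a `2ε`-tree. -/

/-- The binary tree grown from the root `a` by the children map `g`, indexed so that the root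
sits at `1` and the children of node `n` at `2n` and `2n + 1` (index `0` is a dummy copy of `a`). -/
def binaryTree {Y : Type*} (g : Y → Y × Y) (a : Y) : ℕ → Y
  | 0 => a
  | 1 => a
  | n + 2 =>
    let children := g (binaryTree g a ((n + 2) / 2))
    if n % 2 = 0 then children.1 else children.2

lemma binaryTree_two_mul {Y : Type*} (g : Y → Y × Y) (a : Y) {n : ℕ} (hn : 1 ≤ n) :
    binaryTree g a (2 * n) = (g (binaryTree g a n)).1 := by
  obtain ⟨m, rfl⟩ : ∃ m, n = m + 1 := ⟨n - 1, by omega⟩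
  rw [show 2 * (m + 1) = 2 * m + 2 by ring, binaryTree, if_pos (by omega)]
  simp only [show (2 * m + 2) / 2 = m + 1 by omega]

lemma binaryTree_two_mul_add_one {Y : Type*} (g : Y → Y × Y) (a : Y) {n : ℕ} (hn : 1 ≤ n) :
    binaryTree g a (2 * n + 1) = (g (binaryTree g a n)).2 := by
  obtain ⟨m, rfl⟩ : ∃ m, n = m + 1 := ⟨n - 1, by omega⟩
  rw [show 2 * (m + 1) + 1 = (2 * m + 1) + 2 by ring, binaryTree, if_neg (by omega)]
  simp only [show (2 * m + 1 + 2) / 2 = m + 1 by omega]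

lemma exists_isTree_of_forall_isMidpoint {E : Type*} [NormedAddCommGroup E] [NormedSpace ℝ E]
    {ε : ℝ} {A : Set E} (hA : A.Nonempty)
    (H : ∀ a ∈ A, ∃ y ∈ A, ∃ z ∈ A, a = (2⁻¹ : ℝ) • (y + z) ∧ ε ≤ ‖y - z‖) :
    ∃ x : ℕ → E, IsTree ε A x := by
  have H' : ∀ a : A, ∃ p : A × A,
      (a : E) = (2⁻¹ : ℝ) • (p.1 + p.2 : E) ∧ ε ≤ ‖(p.1 - p.2 : E)‖ := by
    rintro ⟨a, ha⟩
    obtain ⟨y, hy, z, hz, hyz⟩ := H a ha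
    exact ⟨(⟨y, hy⟩, ⟨z, hz⟩), hyz⟩
  choose g hg using H'
  obtain ⟨a, ha⟩ := hA
  refine ⟨fun n ↦ ((binaryTree g ⟨a, ha⟩ n : A) : E), fun n _ ↦ (binaryTree g ⟨a, ha⟩ n).2,
    fun n hn ↦ ?_⟩
  simp only [binaryTree_two_mul g _ hn, binaryTree_two_mul_add_one g _ hn]
  exact hg _

lemma exists_lt_norm_of_two_mul_lt_diam {E : Type*} [SeminormedAddCommGroup E] {S : Set E}
    {ε : ℝ} (hε : 0 ≤ ε) (h : 2 * ε < diam S) : ∃ d ∈ S, ε < ‖d‖ := by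
  by_contra! hS
  have hball : S ⊆ closedBall 0 ε := fun d hd ↦ by simpa using hS d hd
  exact h.not_ge (diam_le_of_subset_closedBall hε hball)

section Symmetrization

variable {E : Type*} [NormedAddCommGroup E] {A : Set E}

lemma deltaN_one_le_delta0_symmAt {a : E} (ha : a ∈ A) :
    deltaN A 1 ≤ delta0 (symmAt A a) := by
  refine csInf_le ⟨0, ?_⟩ ⟨symmAt A a, ⟨fun _ ↦ a, fun _ ↦ ha, ?_⟩, rfl⟩
  · rintro _ ⟨D, -, rfl⟩
    exact div_nonneg diam_nonneg zero_le_two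
  · simp [symmSet, iInter_const]

lemma exists_mem_symmAt_lt_norm {a : E} {ε : ℝ} (ha : a ∈ A) (hε : 0 ≤ ε)
    (h : ε < deltaN A 1) : ∃ d ∈ symmAt A a, ε < ‖d‖ := by
  refine exists_lt_norm_of_two_mul_lt_diam hε ?_
  have := h.trans_le (deltaN_one_le_delta0_symmAt ha)
  rw [delta0] at this
  linarith

lemma nonempty_of_deltaN_pos {N : ℕ} (hN : N ≠ 0) (h : 0 < deltaN A N) : A.Nonempty := by
  by_contra! hA
  have hfam : DeltaFam A N = ∅ := by
    ext D
    simp only [DeltaFam, hA, mem_empty_iff_false, iff_false]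
    rintro ⟨x, hx, -⟩
    exact hx ⟨0, Nat.pos_of_ne_zero hN⟩
  simp [deltaN, hfam] at h

end Symmetrization

theorem stmt12_general (A : Set X) (ε : ℝ) (hε : 0 < ε)
    (h : ε < deltaN A 1) :
    ∃ x : ℕ → X, IsTree (2 * ε) A x := by
  refine exists_isTree_of_forall_isMidpoint
    (nonempty_of_deltaN_pos one_ne_zero (hε.trans h)) fun a ha ↦ ?_
  obtain ⟨d, ⟨had, hsd⟩, hd⟩ := exists_mem_symmAt_lt_norm ha hε.le h
  refine ⟨a + d, had, a - d, hsd, ?_, ?_⟩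
  · rw [add_add_sub_cancel, ← two_smul ℝ, smul_smul]
    norm_num
  · calc 2 * ε ≤ 2 * ‖d‖ := by linarith
      _ = ‖(a + d) - (a - d)‖ := by
        rw [add_sub_sub_cancel, ← two_smul ℝ, norm_smul, Real.norm_two]

/-- if `δ₁(A) > ε > 0`, then `A` contains a `2ε`-tree. -/
theorem stmt12 (A : Set X) (hA : IsBounded A) (ε : ℝ) (hε : 0 < ε)
    (h : ε < deltaN A 1) :
    ∃ x : ℕ → X, IsTree (2 * ε) A x :=
  stmt12_general A ε hε h
end

section
/- Let X be a real Banach space and let A' ⊆ X be the set of points of an ε-tree in X (ε > 0). Then δ₁(A') ≥ ε/2. -/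
open Set Metric Bornology

variable {X : Type*} [NormedAddCommGroup X] [NormedSpace ℝ X] [CompleteSpace X]

/-!
Every point `x k` of the tree is the midpoint of `x (2k)` and `x (2k+1)`, so with
`d = x (2k) - x k` both `x k ± d` lie in `A'`. Hence `±d ∈ (A' - x k) ∩ (x k - A')`, a set whose
diameter is therefore at least `‖2d‖ = ‖x (2k) - x (2k+1)‖ ≥ ε`.
-/

open scoped Pointwise

section Symmetrization

variable {E : Type*} [NormedAddCommGroup E] {A : Set E} {x d : E}

theorem symmSet_fin_one (A : Set E) (x : Fin 1 → E) : symmSet A x = symmAt A (x 0) :=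
  iInf_unique _

theorem neg_mem_symmAt (hd : d ∈ symmAt A x) : -d ∈ symmAt A x := by
  obtain ⟨hadd, hsub⟩ := hd
  exact ⟨by rwa [← sub_eq_add_neg], by rwa [sub_neg_eq_add]⟩

theorem symmAt_subset_sub_singleton (A : Set E) (x : E) : symmAt A x ⊆ A - {x} :=
  fun d hd => ⟨x + d, hd.1, x, rfl, add_sub_cancel_left x d⟩

theorem Bornology.IsBounded.symmAt (hA : IsBounded A) (x : E) : IsBounded (symmAt A x) :=
  (hA.sub isBounded_singleton).subset (symmAt_subset_sub_singleton A x)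

theorem norm_add_self_le_diam_symmAt (hA : IsBounded A) (hd : d ∈ symmAt A x) :
    ‖d + d‖ ≤ diam (symmAt A x) := by
  simpa [dist_eq_norm] using dist_le_diam_of_mem (hA.symmAt x) hd (neg_mem_symmAt hd)

theorem le_deltaN_one {c : ℝ} (hA : A.Nonempty) (h : ∀ y ∈ A, c ≤ delta0 (symmAt A y)) :
    c ≤ deltaN A 1 := by
  obtain ⟨y, hy⟩ := hA
  refine le_csInf ⟨_, ⟨symmSet A fun _ => y, ⟨fun _ => y, fun _ => hy, rfl⟩, rfl⟩⟩ ?_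
  rintro _ ⟨D, ⟨ys, hys, rfl⟩, rfl⟩
  rw [symmSet_fin_one]
  exact h _ (hys 0)

end Symmetrization

theorem IsTree.le_diam_symmAt {E : Type*} [NormedAddCommGroup E] [NormedSpace ℝ E]
    {ε : ℝ} {x : ℕ → E} (hx : IsTree ε univ x) (hbdd : IsBounded (x '' Ici 1)) {k : ℕ}
    (hk : 1 ≤ k) : ε ≤ diam (symmAt (x '' Ici 1) (x k)) := by
  obtain ⟨hmid, hsep⟩ := hx.2 k hk
  have hmem : x (2 * k) - x k ∈ symmAt (x '' Ici 1) (x k) :=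
    ⟨⟨2 * k, mem_Ici.2 (by omega), by abel⟩,
      ⟨2 * k + 1, mem_Ici.2 (by omega), by rw [hmid]; module⟩⟩
  calc ε ≤ ‖x (2 * k) - x (2 * k + 1)‖ := hsep
    _ = ‖(x (2 * k) - x k) + (x (2 * k) - x k)‖ := by rw [hmid]; congr 1; module
    _ ≤ diam (symmAt (x '' Ici 1) (x k)) := norm_add_self_le_diam_symmAt hbdd hmem

theorem stmt13_general (ε : ℝ) (x : ℕ → X)
    (hx : IsTree ε (Set.univ : Set X) x)
    (A' : Set X) (hA' : A' = x '' Set.Ici 1) (hbdd : IsBounded A') :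
    ε / 2 ≤ deltaN A' 1 := by
  subst hA'
  refine le_deltaN_one ⟨x 1, 1, mem_Ici.2 le_rfl, rfl⟩ ?_
  rintro _ ⟨k, hk, rfl⟩
  exact div_le_div_of_nonneg_right (hx.le_diam_symmAt hbdd hk) zero_le_two

/-- if `A'` is the set of points of an `ε`-tree in `X` (and is bounded, so that
`δ₁(A')` makes sense), then `δ₁(A') ≥ ε/2`. -/
theorem stmt13 (ε : ℝ) (hε : 0 < ε) (x : ℕ → X)
    (hx : IsTree ε (Set.univ : Set X) x)
    (A' : Set X) (hA' : A' = x '' Set.Ici 1) (hbdd : IsBounded A') :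
    ε / 2 ≤ deltaN A' 1 :=
  stmt13_general ε x hx A' hA' hbdd
end
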